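/- arXiv:1907.11905 — 8 statements merged into one kernel-verified Lean document; each statement's English description precedes it below -/
import Mathlib

section
/- Let k ≥ 4 be an integer, let R be a k-ring with ring partition (X_1, …, X_k), and let Y ⊆ V(R) be a nonempty set. Then either the induced subgraph R[Y] contains a simplicial vertex, or R[Y] is a k-ring with ring partition (X_1 ∩ Y, …, X_k ∩ Y). -/
open SimpleGraph

/-- The closed neighborhood `N_G[v]` of a vertex `v`. -/
def closedNbhd {V : Type} (G : SimpleGraph V) (v : V) : Set V :=
  insert v (G.neighborSet v)

/-- `X` (indexed cyclically by `ZMod k`) is a ring partition of `G`: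
a partition into `k` nonempty sets, each of which can be ordered so that the
closed neighborhoods are nested, with the last one covering `X i` and the first
one being exactly `X (i-1) ∪ X i ∪ X (i+1)`. -/
def IsRingPartition {V : Type} (G : SimpleGraph V) (k : ℕ) (X : ZMod k → Set V) : Prop :=
  (∀ i, (X i).Nonempty) ∧
  (∀ v : V, ∃! i, v ∈ X i) ∧
  ∀ i, ∃ (m : ℕ) (hm : 0 < m) (u : Fin m → V),
    Function.Injective u ∧
    Set.range u = X i ∧
    (∀ j j' : Fin m, j ≤ j' → closedNbhd G (u j') ⊆ closedNbhd G (u j)) ∧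
    X i ⊆ closedNbhd G (u ⟨m - 1, by omega⟩) ∧
    closedNbhd G (u ⟨0, hm⟩) = X (i - 1) ∪ X i ∪ X (i + 1)

/-- `G` is a `k`-ring. -/
def IsRing {V : Type} (G : SimpleGraph V) (k : ℕ) : Prop :=
  ∃ X : ZMod k → Set V, IsRingPartition G k X

/-- `X` is a hyperhole partition of `G`: a partition into `k` nonempty cliques,
each complete to the two neighboring cliques and anticomplete to all remaining
vertices. -/
def IsHyperholePartition {V : Type} (G : SimpleGraph V) (k : ℕ) (X : ZMod k → Set V) : Prop :=
  (∀ i, (X i).Nonempty) ∧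
  (∀ v : V, ∃! i, v ∈ X i) ∧
  (∀ i, G.IsClique (X i)) ∧
  (∀ i, ∀ x ∈ X i, ∀ y ∈ X (i - 1) ∪ X (i + 1), G.Adj x y) ∧
  (∀ i, ∀ x ∈ X i, ∀ y, y ∉ X (i - 1) ∪ X i ∪ X (i + 1) → ¬ G.Adj x y)

/-- `G` is a `k`-hyperhole. -/
def IsHyperhole {V : Type} (G : SimpleGraph V) (k : ℕ) : Prop :=
  ∃ X : ZMod k → Set V, IsHyperholePartition G k X

/-- `X` is a hyperantihole partition of `G`: a partition into `k` nonempty cliques,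
each complete to all vertices outside the two neighboring cliques (and itself),
and anticomplete to the two neighboring cliques. -/
def IsHyperantiholePartition {V : Type} (G : SimpleGraph V) (k : ℕ) (X : ZMod k → Set V) : Prop :=
  (∀ i, (X i).Nonempty) ∧
  (∀ v : V, ∃! i, v ∈ X i) ∧
  (∀ i, G.IsClique (X i)) ∧
  (∀ i, ∀ x ∈ X i, ∀ y, y ∉ X (i - 1) ∪ X i ∪ X (i + 1) → G.Adj x y) ∧
  (∀ i, ∀ x ∈ X i, ∀ y ∈ X (i - 1) ∪ X (i + 1), ¬ G.Adj x y)

/-- `G` is a `k`-hyperantihole. -/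
def IsHyperantihole {V : Type} (G : SimpleGraph V) (k : ℕ) : Prop :=
  ∃ X : ZMod k → Set V, IsHyperantiholePartition G k X

/-- A vertex is simplicial if its neighborhood is a clique. -/
def IsSimplicial {V : Type} (G : SimpleGraph V) (v : V) : Prop :=
  G.IsClique (G.neighborSet v)

/-- A graph is perfect if every induced subgraph has chromatic number equal to
its clique number. -/
def IsPerfect {V : Type} (G : SimpleGraph V) : Prop :=
  ∀ S : Set V, (G.induce S).chromaticNumber = ((G.induce S).cliqueNum : ℕ∞)

/-- The function `f_k`: `⌊kn/(k-1)⌋` if `n ≡ 0, 1 (mod k-1)`, and `⌈kn/(k-1)⌉`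
otherwise. -/
def ringF (k n : ℕ) : ℕ :=
  if n % (k - 1) ≤ 1 then k * n / (k - 1) else (k * n + (k - 2)) / (k - 1)

/-- The function `g_k`: `⌊kn/(k-1)⌋` if `n mod (k-1) ∈ {0, …, (k-3)/2}`, and
`⌈kn/(k-1)⌉` if `n mod (k-1) ∈ {(k-1)/2, …, k-2}`. -/
def ringG (k n : ℕ) : ℕ :=
  if n % (k - 1) ≤ (k - 3) / 2 then k * n / (k - 1) else (k * n + (k - 2)) / (k - 1)

/-- The function `f_T`: `⌊5n/4⌋` if `n ≡ 0, 1 (mod 4)`, and `⌈5n/4⌉` if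
`n ≡ 2, 3 (mod 4)`. -/
def fT (n : ℕ) : ℕ :=
  if n % 4 ≤ 1 then 5 * n / 4 else (5 * n + 3) / 4

/-- `G` contains the complete graph `K_m` as a minor, witnessed by `m` pairwise
disjoint nonempty branch sets, each inducing a connected subgraph, with an edge
between every two of them. -/
def HasCompleteMinor {V : Type} (G : SimpleGraph V) (m : ℕ) : Prop :=
  ∃ S : Fin m → Set V,
    (∀ i, (S i).Nonempty) ∧
    (∀ i j, i ≠ j → Disjoint (S i) (S j)) ∧
    (∀ i, (G.induce (S i)).Connected) ∧
    (∀ i j, i ≠ j → ∃ x ∈ S i, ∃ y ∈ S j, G.Adj x y)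

lemma mem_closedNbhd_iff {V : Type} (G : SimpleGraph V) (v w : V) :
    w ∈ closedNbhd G v ↔ w = v ∨ G.Adj v w := by
  simp [closedNbhd]

lemma closedNbhd_comm {V : Type} (G : SimpleGraph V) (v w : V) :
    w ∈ closedNbhd G v ↔ v ∈ closedNbhd G w := by
  simp [closedNbhd, eq_comm, SimpleGraph.adj_comm]

lemma induce_mem_closedNbhd {V : Type} (G : SimpleGraph V) (Y : Set V) (v w : ↥Y) :
    w ∈ closedNbhd (G.induce Y) v ↔ (w : V) ∈ closedNbhd G (v : V) := by
  simp [closedNbhd, Subtype.ext_iff]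

/-- Let `R` be a `k`-ring with ring partition `X` and let `Y` be a nonempty
set of vertices.  Then either the induced subgraph `R[Y]` contains a simplicial
vertex, or `R[Y]` is a `k`-ring with ring partition `(X₁ ∩ Y, …, X_k ∩ Y)`. -/
theorem ring_induce_simplicial_or_ring {V : Type} [Fintype V]
    (k : ℕ) (hk : 4 ≤ k) (R : SimpleGraph V)
    (X : ZMod k → Set V) (hX : IsRingPartition R k X)
    (Y : Set V) (hY : Y.Nonempty) :
    (∃ v : Y, IsSimplicial (R.induce Y) v) ∨
    IsRingPartition (R.induce Y) k (fun i => {y : Y | (y : V) ∈ X i}) := by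
  classical
  haveI : NeZero k := ⟨by omega⟩
  obtain ⟨hne, hpart, hord⟩ := hX
  choose m hm u hinj hrange hnest hlast hfirst using hord
  have hz : ∀ c : ℕ, 0 < c → c < k → ((c : ZMod k) ≠ 0) := by
    intro c h1 h2 h
    have := (ZMod.natCast_eq_zero_iff c k).1 h
    exact absurd (Nat.le_of_dvd h1 this) (by omega)
  have huniq : ∀ {v : V} {i i' : ZMod k}, v ∈ X i → v ∈ X i' → i = i' := by
    intro v i i' h h'
    obtain ⟨j, _, hj⟩ := hpart v
    rw [hj i h, hj i' h']
  have memX : ∀ (i : ZMod k) (j : Fin (m i)), u i j ∈ X i := fun i j =>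
    (hrange i) ▸ Set.mem_range_self j
  have subX : ∀ (i : ZMod k) (j : Fin (m i)), X i ⊆ closedNbhd R (u i j) := by
    intro i j
    refine (hlast i).trans (hnest i j ⟨m i - 1, by have := hm i; omega⟩ ?_)
    rw [Fin.le_def]
    exact Nat.le_pred_of_lt j.isLt
  have cliq : ∀ (i : ZMod k) {x x' : V}, x ∈ X i → x' ∈ X i → x ≠ x' → R.Adj x x' := by
    intro i x x' hx hx' hxx
    rw [← hrange i] at hx
    obtain ⟨j, rfl⟩ := hx
    rcases (mem_closedNbhd_iff R _ _).1 (subX i j hx') with h | h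
    · exact absurd h.symm hxx
    · exact h
  have nbhdsub : ∀ (i : ZMod k) (j : Fin (m i)),
      closedNbhd R (u i j) ⊆ X (i - 1) ∪ X i ∪ X (i + 1) := by
    intro i j
    rw [← hfirst i]
    exact hnest i ⟨0, hm i⟩ j (by rw [Fin.le_def]; exact Nat.zero_le _)
  -- the key simpliciality lemma
  have L : ∀ (i i'' : ZMod k) (l : Fin (m i)) (hbY : u i l ∈ Y),
      (∀ t : Fin (m i), u i t ∈ Y → t ≤ l) →
      (∀ c, c ∈ Y → c ∈ closedNbhd R (u i l) → c ∈ X i ∪ X i'') →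
      IsSimplicial (R.induce Y) ⟨u i l, hbY⟩ := by
    intro i i'' l hbY hmax hcov
    rw [IsSimplicial, SimpleGraph.isClique_iff]
    intro v hv w hw hvw
    simp only [SimpleGraph.mem_neighborSet, comap_adj, Function.Embedding.coe_subtype] at hv hw
    show (R.induce Y).Adj v w
    rw [comap_adj]
    simp only [Function.Embedding.coe_subtype]
    have hvw' : (v : V) ≠ (w : V) := fun h => hvw (Subtype.ext h)
    have hvC : (v : V) ∈ X i ∪ X i'' :=
      hcov v v.2 ((mem_closedNbhd_iff R _ _).2 (Or.inr hv))
    have hwC : (w : V) ∈ X i ∪ X i'' :=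
      hcov w w.2 ((mem_closedNbhd_iff R _ _).2 (Or.inr hw))
    have mixed : ∀ a b : ↥Y, (a : V) ∈ X i → (b : V) ∈ X i'' →
        R.Adj (u i l) (b : V) → (a : V) ≠ (b : V) → R.Adj (a : V) (b : V) := by
      intro a b haX hbX hab hne'
      have : (a : V) ∈ Set.range (u i) := (hrange i) ▸ haX
      obtain ⟨t, ht⟩ := this
      have htl : t ≤ l := hmax t (by rw [ht]; exact a.2)
      have hb : (b : V) ∈ closedNbhd R (u i t) :=
        hnest i t l htl ((mem_closedNbhd_iff R _ _).2 (Or.inr hab))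
      rw [ht] at hb
      rcases (mem_closedNbhd_iff R _ _).1 hb with h | h
      · exact absurd h.symm hne'
      · exact h
    rcases hvC with hv1 | hv1 <;> rcases hwC with hw1 | hw1
    · exact cliq i hv1 hw1 hvw'
    · exact mixed v w hv1 hw1 hw hvw'
    · exact (mixed w v hw1 hv1 hv hvw'.symm).symm
    · exact cliq i'' hv1 hw1 hvw'
  by_cases hP : ∀ i : ZMod k, ∃ j : Fin (m i), u i j ∈ Y ∧
      ∀ y ∈ Y, y ∈ X (i - 1) ∪ X (i + 1) → y ∈ closedNbhd R (u i j)
  · -- construct the ring partition of the induced graph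
    right
    refine ⟨?_, ?_, ?_⟩
    · intro i
      obtain ⟨j, hjY, -⟩ := hP i
      exact ⟨⟨u i j, hjY⟩, memX i j⟩
    · intro v
      obtain ⟨i, hi, hu⟩ := hpart (v : V)
      exact ⟨i, hi, fun i' hi' => hu i' hi'⟩
    · intro i
      obtain ⟨j0, hj0Y, hj0cov⟩ := hP i
      set s : Finset (Fin (m i)) := Finset.univ.filter (fun t => u i t ∈ Y) with hsdef
      have hj0s : j0 ∈ s := by simp [hsdef, hj0Y]
      have hM : 0 < s.card := Finset.card_pos.mpr ⟨j0, hj0s⟩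
      set e := s.orderIsoOfFin rfl with he
      have heY : ∀ t : Fin s.card, u i ((e t : ↥s) : Fin (m i)) ∈ Y := by
        intro t
        exact (Finset.mem_filter.1 (e t).2).2
      have hmin : ∀ j ∈ s, ((e ⟨0, hM⟩ : ↥s) : Fin (m i)) ≤ j := by
        intro j hj
        obtain ⟨t, ht⟩ := e.surjective ⟨j, hj⟩
        have h0t : (⟨0, hM⟩ : Fin s.card) ≤ t := by rw [Fin.le_def]; exact Nat.zero_le _
        have := e.monotone h0t
        rw [ht] at this
        exact this
      refine ⟨s.card, hM, fun t => ⟨u i ((e t : ↥s) : Fin (m i)), heY t⟩, ?_, ?_, ?_, ?_, ?_⟩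
      · intro t t' h
        have h1 : u i ((e t : ↥s) : Fin (m i)) = u i ((e t' : ↥s) : Fin (m i)) :=
          congrArg Subtype.val h
        exact e.injective (Subtype.ext (hinj i h1))
      · ext v
        simp only [Set.mem_range, Set.mem_setOf_eq]
        constructor
        · rintro ⟨t, rfl⟩
          exact memX i _
        · intro hv
          have : (v : V) ∈ Set.range (u i) := (hrange i) ▸ hv
          obtain ⟨t0, ht0⟩ := this
          have ht0s : t0 ∈ s := by simp [hsdef]; rw [ht0]; exact v.2
          obtain ⟨t, ht⟩ := e.surjective ⟨t0, ht0s⟩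
          refine ⟨t, Subtype.ext ?_⟩
          show u i ((e t : ↥s) : Fin (m i)) = (v : V)
          rw [show ((e t : ↥s) : Fin (m i)) = t0 from congrArg Subtype.val ht]
          exact ht0
      · intro t t' htt' w hw
        rw [induce_mem_closedNbhd] at hw ⊢
        exact hnest i _ _ (Subtype.coe_le_coe.mpr (e.monotone htt')) hw
      · intro w hw
        rw [induce_mem_closedNbhd]
        exact subX i _ hw
      · ext w
        simp only [Set.mem_union, Set.mem_setOf_eq]
        rw [induce_mem_closedNbhd]
        constructor
        · intro hw
          have := hnest i ⟨0, hm i⟩ _ (by rw [Fin.le_def]; exact Nat.zero_le _) hw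
          rw [hfirst i] at this
          simpa using this
        · intro hw
          rcases hw with (h | h) | h
          · exact hnest i _ j0 (hmin j0 hj0s) (hj0cov w w.2 (Or.inl h))
          · exact subX i _ h
          · exact hnest i _ j0 (hmin j0 hj0s) (hj0cov w w.2 (Or.inr h))
  · left
    by_cases hall : ∀ i : ZMod k, (Y ∩ X i).Nonempty
    · -- all classes meet Y, but the covering condition fails for some i
      push_neg at hP
      obtain ⟨i, hi⟩ := hP
      obtain ⟨a0, ha0Y, ha0X⟩ := hall i
      set s : Finset (Fin (m i)) := Finset.univ.filter (fun t => u i t ∈ Y) with hsdef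
      have hsne : s.Nonempty := by
        rw [← hrange i] at ha0X
        obtain ⟨t, ht⟩ := ha0X
        exact ⟨t, by simp [hsdef]; rw [ht]; exact ha0Y⟩
      set j := s.min' hsne with hjdef
      have hjY : u i j ∈ Y := by
        have := s.min'_mem hsne
        simpa [hsdef] using this
      have hjmin : ∀ t : Fin (m i), u i t ∈ Y → j ≤ t := by
        intro t ht
        exact s.min'_le t (by simp [hsdef, ht])
      obtain ⟨y, hyY, hyX, hyN⟩ := hi j hjY
      have finish : ∀ d e : ZMod k, d ≠ i → y ∈ X d →
          (∀ t : Fin (m d), closedNbhd R (u d t) ⊆ X i ∪ X d ∪ X e) →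
          ∃ v : ↥Y, IsSimplicial (R.induce Y) v := by
        intro d e hdi hyd hcov
        obtain ⟨b0, hb0Y, hb0X⟩ := hall d
        set sd : Finset (Fin (m d)) := Finset.univ.filter (fun t => u d t ∈ Y) with hsdd
        have hsdne : sd.Nonempty := by
          rw [← hrange d] at hb0X
          obtain ⟨t, ht⟩ := hb0X
          exact ⟨t, by simp [hsdd]; rw [ht]; exact hb0Y⟩
        set l := sd.max' hsdne with hldef
        have hlY : u d l ∈ Y := by
          have := sd.max'_mem hsdne
          simpa [hsdd] using this
        have hlmax : ∀ t : Fin (m d), u d t ∈ Y → t ≤ l := by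
          intro t ht
          exact sd.le_max' t (by simp [hsdd, ht])
        refine ⟨⟨u d l, hlY⟩, L d e l hlY hlmax ?_⟩
        intro c hcY hcN
        rcases hcov l hcN with (hc | hc) | hc
        · -- c ∈ X i : contradiction
          exfalso
          have : c ∈ Set.range (u i) := (hrange i) ▸ hc
          obtain ⟨t, ht⟩ := this
          have hbc : u d l ∈ closedNbhd R (u i t) := by
            rw [ht]
            exact (closedNbhd_comm R _ _).1 hcN
          have hba : u d l ∈ closedNbhd R (u i j) :=
            hnest i j t (hjmin t (by rw [ht]; exact hcY)) hbc
          have hab : u i j ∈ closedNbhd R (u d l) := (closedNbhd_comm R _ _).1 hba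
          have : y ∈ Set.range (u d) := (hrange d) ▸ hyd
          obtain ⟨sy, hsy⟩ := this
          have hay : u i j ∈ closedNbhd R y := by
            rw [← hsy]
            exact hnest d sy l (hlmax sy (by rw [hsy]; exact hyY)) hab
          exact hyN ((closedNbhd_comm R _ _).1 hay)
        · exact Or.inl hc
        · exact Or.inr hc
      rcases hyX with hcase | hcase
      · -- y ∈ X (i - 1)
        refine finish (i - 1) (i - 2) ?_ hcase ?_
        · intro h
          exact hz 1 (by omega) (by omega) (by linear_combination -h)
        · intro t x hx
          have hx2 := nbhdsub (i - 1) t hx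
          rw [show i - 1 - 1 = i - 2 by ring, show i - 1 + 1 = i by ring] at hx2
          simp only [Set.mem_union] at hx2 ⊢
          tauto
      · -- y ∈ X (i + 1)
        refine finish (i + 1) (i + 2) ?_ hcase ?_
        · intro h
          exact hz 1 (by omega) (by omega) (by linear_combination h)
        · intro t x hx
          have hx2 := nbhdsub (i + 1) t hx
          rw [show i + 1 - 1 = i by ring, show i + 1 + 1 = i + 2 by ring] at hx2
          simp only [Set.mem_union] at hx2 ⊢
          tauto
    · -- some class misses Y
      push_neg at hall
      obtain ⟨ie, hie⟩ := hall
      obtain ⟨i0, h0, hne1⟩ : ∃ i : ZMod k, Y ∩ X i = ∅ ∧ (Y ∩ X (i + 1)).Nonempty := by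
        by_contra hc
        push_neg at hc
        obtain ⟨y0, hy0⟩ := hY
        obtain ⟨i1, hi1, -⟩ := hpart y0
        have hstep : ∀ n : ℕ, Y ∩ X (ie + n) = ∅ := by
          intro n
          induction n with
          | zero => simpa using hie
          | succ n ih =>
            rw [show (ie + ((n + 1 : ℕ) : ZMod k)) = ie + (n : ℕ) + 1 by push_cast; ring]
            exact hc (ie + n) ih
        have := hstep (i1 - ie).val
        rw [ZMod.natCast_rightInverse (i1 - ie),
          show ie + (i1 - ie) = i1 by ring] at this
        exact absurd (Set.mem_inter hy0 hi1) (by rw [this]; simp)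
      set d := i0 + 1 with hddef
      obtain ⟨b0, hb0Y, hb0X⟩ := hne1
      set sd : Finset (Fin (m d)) := Finset.univ.filter (fun t => u d t ∈ Y) with hsdd
      have hsdne : sd.Nonempty := by
        rw [← hrange d] at hb0X
        obtain ⟨t, ht⟩ := hb0X
        exact ⟨t, by simp [hsdd]; rw [ht]; exact hb0Y⟩
      set l := sd.max' hsdne with hldef
      have hlY : u d l ∈ Y := by
        have := sd.max'_mem hsdne
        simpa [hsdd] using this
      have hlmax : ∀ t : Fin (m d), u d t ∈ Y → t ≤ l := by
        intro t ht
        exact sd.le_max' t (by simp [hsdd, ht])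
      refine ⟨⟨u d l, hlY⟩, L d (i0 + 2) l hlY hlmax ?_⟩
      intro c hcY hcN
      have := nbhdsub d l hcN
      rw [show d - 1 = i0 by rw [hddef]; ring, show d + 1 = i0 + 2 by rw [hddef]; ring] at this
      rcases this with (hc | hc) | hc
      · exact absurd (Set.mem_inter hcY hc) (by rw [h0]; simp)
      · exact Or.inl hc
      · exact Or.inr hc
end

section
/- Let G be a graph on at least two vertices, and let v be a simplicial vertex of G. Then ω(G) = max{|N_G[v]|, ω(G ∖ v)} and χ(G) = max{ω(G), χ(G ∖ v)}, where G ∖ v denotes the induced subgraph of G obtained by deleting v. -/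
open SimpleGraph

/-!
A clique of `G` either contains `v`, and then lies in `N_G[v]`, or is a clique of `G ∖ v`; since
`N_G[v]` is itself a clique when `v` is simplicial, this gives the formula for `ω`. For `χ`, any
colouring of `G ∖ v` with at least `deg v + 1 = |N_G[v]| ≤ ω(G)` colours leaves a colour free on
the neighbours of `v`, which can be given to `v`.
-/

namespace SimpleGraph

variable {V : Type} {G : SimpleGraph V}

theorem IsClique.ncard_le_cliqueNum [Finite V] {s : Set V} (hs : G.IsClique s) :
    s.ncard ≤ G.cliqueNum := by
  have hfin : s.Finite := s.toFinite
  rw [Set.ncard_eq_toFinset_card s hfin]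
  exact IsClique.card_le_cliqueNum (tc := by rwa [hfin.coe_toFinset])

theorem IsClique.card_le_cliqueNum_induce [Finite V] {S : Set V} {s : Finset V}
    (hs : G.IsClique (s : Set V)) (hsS : (s : Set V) ⊆ S) :
    s.card ≤ (G.induce S).cliqueNum := by
  classical
  have hmap : (s.subtype (· ∈ S)).map (Function.Embedding.subtype _) = s :=
    Finset.subtype_map_of_mem fun _ hx => hsS hx
  have hclique : (G.induce S).IsNClique s.card (s.subtype (· ∈ S)) := by
    rw [isNClique_induce_iff, hmap]
    exact ⟨hs, rfl⟩
  exact hclique.card_eq ▸ hclique.isClique.card_le_cliqueNum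

theorem IsSimplicial.isClique_closedNbhd {v : V} (hv : IsSimplicial G v) :
    G.IsClique (closedNbhd G v) :=
  hv.insert fun _ hb _ => hb

theorem ncard_closedNbhd (v : V) [Fintype (G.neighborSet v)] :
    (closedNbhd G v).ncard = G.degree v + 1 := by
  rw [closedNbhd, Set.ncard_insert_of_notMem G.notMem_neighborSet_self,
    Set.ncard_eq_toFinset_card', ← card_neighborFinset_eq_degree, neighborFinset_def]

theorem cliqueNum_le_max_ncard_closedNbhd [Finite V] (v : V) :
    G.cliqueNum ≤ max (closedNbhd G v).ncard (G.induce {v}ᶜ).cliqueNum := by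
  obtain ⟨s, hs⟩ := G.exists_isNClique_cliqueNum
  rw [← hs.card_eq]
  by_cases hvs : v ∈ s
  · have hsub : (s : Set V) ⊆ closedNbhd G v := fun x hx => by
      rcases eq_or_ne x v with rfl | hxv
      · exact Set.mem_insert _ _
      · exact Set.mem_insert_of_mem _ (hs.isClique hvs hx hxv.symm)
    rw [← Set.ncard_coe_finset]
    exact le_max_of_le_left (Set.ncard_le_ncard hsub)
  · refine le_max_of_le_right (hs.isClique.card_le_cliqueNum_induce fun x hx => ?_)
    rintro rfl
    exact hvs hx

theorem Colorable.of_induce_compl_singleton {v : V} [Fintype (G.neighborSet v)] {n : ℕ}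
    (hc : (G.induce {v}ᶜ).Colorable n) (hdeg : G.degree v < n) : G.Colorable n := by
  classical
  obtain ⟨C⟩ := hc
  let usedColors : Finset (Fin n) :=
    ((G.neighborFinset v).subtype (· ∈ ({v}ᶜ : Set V))).image C
  have hcard : usedColors.card < (Finset.univ : Finset (Fin n)).card := calc
    usedColors.card ≤ ((G.neighborFinset v).subtype (· ∈ ({v}ᶜ : Set V))).card :=
      Finset.card_image_le
    _ ≤ G.degree v := by
      rw [Finset.card_subtype, ← card_neighborFinset_eq_degree]
      exact Finset.card_filter_le _ _
    _ < _ := by simpa using hdeg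
  obtain ⟨c, -, hc_fresh⟩ := Finset.exists_mem_notMem_of_card_lt_card hcard
  have hfree : ∀ u (hu : u ∈ ({v}ᶜ : Set V)), G.Adj v u → C ⟨u, hu⟩ ≠ c := by
    rintro u hu huv rfl
    exact hc_fresh (Finset.mem_image_of_mem C (Finset.mem_subtype.mpr (by simpa using huv)))
  refine ⟨Coloring.mk (fun u => if hu : u = v then c else C ⟨u, hu⟩) fun {a b} hab => ?_⟩
  by_cases ha : a = v <;> by_cases hb : b = v
  · exact absurd (ha.trans hb.symm) hab.ne
  · subst ha; simpa [hb] using (hfree b hb hab).symm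
  · subst hb; simpa [ha] using hfree a ha hab.symm
  · simpa [ha, hb] using C.valid (show (G.induce {v}ᶜ).Adj ⟨a, ha⟩ ⟨b, hb⟩ from hab)

theorem chromaticNumber_le_max_degree_succ [Finite V] (v : V) [Fintype (G.neighborSet v)] :
    G.chromaticNumber ≤ max ((G.degree v + 1 : ℕ) : ℕ∞) (G.induce {v}ᶜ).chromaticNumber := by
  have hH := (G.induce {v}ᶜ).colorable_chromaticNumber_of_fintype
  have hne : (G.induce {v}ᶜ).chromaticNumber ≠ ⊤ :=
    chromaticNumber_ne_top_iff_exists.mpr ⟨_, hH⟩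
  have hG : G.Colorable (max (G.degree v + 1) (G.induce {v}ᶜ).chromaticNumber.toNat) :=
    (hH.mono (le_max_right _ _)).of_induce_compl_singleton (by omega)
  have hle := hG.chromaticNumber_le
  rwa [Nat.mono_cast.map_max, ENat.natCast_toNat hne] at hle

end SimpleGraph

theorem simplicial_cliqueNum_chromaticNumber_general {V : Type} [Fintype V]
    (G : SimpleGraph V)
    (v : V) (hv : IsSimplicial G v) :
    G.cliqueNum = max (closedNbhd G v).ncard (G.induce {v}ᶜ).cliqueNum ∧
    G.chromaticNumber = max (G.cliqueNum : ℕ∞) (G.induce {v}ᶜ).chromaticNumber := by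
  classical
  have hclosed := hv.isClique_closedNbhd.ncard_le_cliqueNum
  refine ⟨le_antisymm (cliqueNum_le_max_ncard_closedNbhd v)
    (max_le hclosed (G.cliqueNum_induce_le _)), le_antisymm ?_ ?_⟩
  · calc G.chromaticNumber
        ≤ max ((G.degree v + 1 : ℕ) : ℕ∞) (G.induce {v}ᶜ).chromaticNumber :=
          chromaticNumber_le_max_degree_succ v
      _ ≤ max (G.cliqueNum : ℕ∞) (G.induce {v}ᶜ).chromaticNumber := by
          gcongr
          rw [← ncard_closedNbhd]
          exact_mod_cast hclosed
  · exact max_le G.cliqueNum_le_chromaticNumber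
      (chromaticNumber_mono_of_hom (Embedding.induce _).toHom)

/-- If `G` has at least two vertices and `v` is a simplicial vertex of `G`, then
`ω(G) = max {|N_G[v]|, ω(G \ v)}` and `χ(G) = max {ω(G), χ(G \ v)}`. -/
theorem simplicial_cliqueNum_chromaticNumber {V : Type} [Fintype V]
    (G : SimpleGraph V) (h2 : 2 ≤ Fintype.card V)
    (v : V) (hv : IsSimplicial G v) :
    G.cliqueNum = max (closedNbhd G v).ncard (G.induce {v}ᶜ).cliqueNum ∧
    G.chromaticNumber = max (G.cliqueNum : ℕ∞) (G.induce {v}ᶜ).chromaticNumber :=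
  simplicial_cliqueNum_chromaticNumber_general G v hv
end

section
/- Every even ring is perfect; that is, if k ≥ 4 is an even integer and R is a k-ring, then every induced subgraph H of R satisfies χ(H) = ω(H). -/
open SimpleGraph

/-! An even ring is a comparability graph, and comparability graphs are perfect: colouring each
vertex by its height in the partial order uses as many colours as the longest chain, and chains
are cliques.

To orient a `k`-ring transitively, split the bags `X i` into two classes by the parity of `i`,
which is well defined since `k` is even; adjacent vertices of different bags then lie in different
classes. Orient the edges between bags from the first class to the second; inside a bag of the
first class orient `u_i^j → u_i^j'` for `j < j'`, inside a bag of the second class the other way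
round. In a directed path `x → y → z` either `x, y` share a bag of the first class and
`N[y] ⊆ N[x]`, or `y, z` share a bag of the second class and `N[y] ⊆ N[z]`; in both cases `x` and
`z` are adjacent. -/

section Comparability

variable {W : Type} [PartialOrder W] [Finite W] {G : SimpleGraph W}

lemma LTSeries.length_lt_cliqueNum (hG : ∀ x y, G.Adj x y ↔ x < y ∨ y < x)
    (p : LTSeries W) : p.length < G.cliqueNum := by
  let s := Finset.univ.map ⟨p, p.strictMono.injective⟩
  have hclique : G.IsClique (s : Set W) := by
    simp only [s, Finset.coe_map, Finset.coe_univ, Set.image_univ]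
    rintro _ ⟨i, rfl⟩ _ ⟨j, rfl⟩ hne
    rw [hG]
    rcases lt_or_gt_of_ne (ne_of_apply_ne p hne) with h | h
    · exact Or.inl (p.strictMono h)
    · exact Or.inr (p.strictMono h)
  simpa [s] using IsClique.card_le_cliqueNum (tc := hclique)

lemma chromaticNumber_eq_cliqueNum_of_adj_iff_lt (hG : ∀ x y, G.Adj x y ↔ x < y ∨ y < x) :
    G.chromaticNumber = G.cliqueNum := by
  have hheight : ∀ x, Order.height x ≤ (G.cliqueNum - 1 : ℕ) := fun x =>
    Order.height_le_iff.mpr fun p _ => by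
      have := p.length_lt_cliqueNum hG
      exact_mod_cast Nat.le_sub_one_of_lt this
  have hfin : ∀ x, Order.height x < ⊤ := fun x => (hheight x).trans_lt (ENat.natCast_lt_top _)
  have hlt : ∀ x, (Order.height x).toNat < G.cliqueNum := fun x => by
    obtain ⟨p, -, hp⟩ := Order.exists_series_of_height_eq_coe x (ENat.natCast_toNat (hfin x).ne).symm
    exact hp ▸ p.length_lt_cliqueNum hG
  let C : G.Coloring (Fin G.cliqueNum) := Coloring.mk (fun x => ⟨_, hlt x⟩) fun {x y} hxy heq => by
    have : Order.height x = Order.height y := by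
      rw [← ENat.natCast_toNat (hfin x).ne, ← ENat.natCast_toNat (hfin y).ne, Fin.mk.inj heq]
    rcases (hG x y).mp hxy with h | h
    · exact (Order.height_strictMono h (hfin x)).ne this
    · exact (Order.height_strictMono h (hfin y)).ne' this
  exact le_antisymm (Colorable.chromaticNumber_le ⟨C⟩) G.cliqueNum_le_chromaticNumber

lemma isPerfect_of_adj_iff_lt (hG : ∀ x y, G.Adj x y ↔ x < y ∨ y < x) :
    IsPerfect G := fun _ => chromaticNumber_eq_cliqueNum_of_adj_iff_lt fun x y => hG x y

end Comparability

lemma isPerfect_of_transitive_orientation {V α : Type} [Finite V] [LinearOrder α]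
    (G : SimpleGraph V) (φ : V → α) (hφ : ∀ x y, G.Adj x y → φ x ≠ φ y)
    (htrans : ∀ x y z, G.Adj x y → G.Adj y z → φ x < φ y → φ y < φ z → G.Adj x z) :
    IsPerfect G := by
  let r x y := G.Adj x y ∧ φ x < φ y
  have : IsStrictOrder V r :=
    { irrefl := fun x h => G.loopless.irrefl x h.1
      trans := fun x y z hxy hyz => ⟨htrans x y z hxy.1 hyz.1 hxy.2 hyz.2, hxy.2.trans hyz.2⟩ }
  let _ : PartialOrder V := partialOrderOfSO r
  refine isPerfect_of_adj_iff_lt fun x y => ⟨fun h => ?_, ?_⟩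
  · rcases lt_or_gt_of_ne (hφ x y h) with hlt | hlt
    · exact Or.inl ⟨h, hlt⟩
    · exact Or.inr ⟨h.symm, hlt⟩
  · rintro (h | h)
    exacts [h.1, h.1.symm]

lemma adj_of_mem_closedNbhd {V : Type} {G : SimpleGraph V} {x y : V}
    (hy : y ∈ closedNbhd G x) (hne : y ≠ x) : G.Adj x y :=
  hy.resolve_left hne

lemma isPerfect_of_nested_bags {V β : Type} [Finite V] (G : SimpleGraph V) (ι : V → β)
    (σ : β → Bool) (rk : V → ℕ)
    (hcross : ∀ x y, G.Adj x y → σ (ι x) = σ (ι y) → ι x = ι y)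
    (hnest : ∀ x y, ι x = ι y → rk x ≤ rk y → closedNbhd G y ⊆ closedNbhd G x)
    (hrk : ∀ x y, ι x = ι y → rk x = rk y → x = y) :
    IsPerfect G := by
  let φ x : Bool ×ₗ ℤ := toLex (σ (ι x), if σ (ι x) then -(rk x : ℤ) else rk x)
  have hσ_mono : ∀ {x y}, φ x < φ y → σ (ι x) ≤ σ (ι y) := fun h =>
    (Prod.Lex.toLex_lt_toLex'.mp h).1
  have hsame : ∀ {x y}, G.Adj x y → φ x < φ y → σ (ι x) = σ (ι y) →
      ι x = ι y ∧ if σ (ι y) then rk y < rk x else rk x < rk y := by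
    intro x y hxy hlt hs
    simp only [φ, Prod.Lex.toLex_lt_toLex, hs, lt_self_iff_false, true_and, false_or] at hlt
    refine ⟨hcross x y hxy hs, ?_⟩
    split_ifs at hlt ⊢ <;> omega
  refine isPerfect_of_transitive_orientation G φ (fun x y hxy heq => ?_) ?_
  · simp only [φ, toLex_inj, Prod.mk.injEq] at heq
    obtain ⟨hs, hr⟩ := heq
    refine hxy.ne (hrk x y (hcross x y hxy hs) ?_)
    rw [hs] at hr
    split_ifs at hr <;> omega
  · intro x y z hxy hyz hφxy hφyz
    have hxz : x ≠ z := fun h => (hφxy.trans hφyz).ne (congrArg φ h)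
    cases hy : σ (ι y)
    · have hx : σ (ι x) = false := Bool.eq_false_of_le_false (hy ▸ hσ_mono hφxy)
      obtain ⟨hb, hlt⟩ := hsame hxy hφxy (hx.trans hy.symm)
      simp only [hy] at hlt
      have hz_mem : z ∈ closedNbhd G x := hnest x y hb hlt.le (Set.mem_insert_of_mem _ hyz)
      exact adj_of_mem_closedNbhd hz_mem hxz.symm
    · have hz : σ (ι z) = true := Bool.eq_true_of_true_le (hy ▸ hσ_mono hφyz)
      obtain ⟨hb, hlt⟩ := hsame hyz hφyz (hy.trans hz.symm)
      simp only [hz, if_true] at hlt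
      have hx_mem : x ∈ closedNbhd G z :=
        hnest z y hb.symm hlt.le (Set.mem_insert_of_mem _ hxy.symm)
      exact (adj_of_mem_closedNbhd hx_mem hxz).symm

lemma decide_castHom_add_one_ne {k : ℕ} (h : 2 ∣ k) (i : ZMod k) :
    decide (ZMod.castHom h (ZMod 2) (i + 1) = 0) ≠ decide (ZMod.castHom h (ZMod 2) i = 0) := by
  rw [map_add, map_one]
  generalize ZMod.castHom h (ZMod 2) i = a
  revert a
  decide

lemma IsRingPartition.exists_bag_rank {V : Type} {G : SimpleGraph V} {k : ℕ}
    {X : ZMod k → Set V} (hX : IsRingPartition G k X) :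
    ∃ (ι : V → ZMod k) (rk : V → ℕ),
      (∀ x y, G.Adj x y → ι y = ι x - 1 ∨ ι y = ι x ∨ ι y = ι x + 1) ∧
      (∀ x y, ι x = ι y → rk x ≤ rk y → closedNbhd G y ⊆ closedNbhd G x) ∧
      (∀ x y, ι x = ι y → rk x = rk y → x = y) := by
  obtain ⟨-, hpart, hbags⟩ := hX
  choose m hm u _ hrange hnest _ hfirst using hbags
  choose ι hι using fun v => (hpart v).exists
  have hι_eq : ∀ v i, v ∈ X i → ι v = i := fun v i hv => (hpart v).unique (hι v) hv
  choose pos hpos using fun v => (hrange (ι v)).symm ▸ hι v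
  have hpos_of_eq : ∀ x y, ι x = ι y → ∃ j, u (ι x) j = y ∧ (j : ℕ) = pos y := by
    intro x y h
    rw [h]
    exact ⟨pos y, hpos y, rfl⟩
  refine ⟨ι, fun v => pos v, fun x y hxy => ?_, fun x y h hle => ?_, fun x y h heq => ?_⟩
  · have hx := hnest (ι x) ⟨0, hm _⟩ (pos x) (Nat.zero_le _)
    rw [hpos x, hfirst] at hx
    rcases hx (Set.mem_insert_of_mem _ hxy) with (hy | hy) | hy
    exacts [Or.inl (hι_eq y _ hy), Or.inr (Or.inl (hι_eq y _ hy)), Or.inr (Or.inr (hι_eq y _ hy))]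
  · obtain ⟨j, hj, hjpos⟩ := hpos_of_eq x y h
    simpa [hpos x, hj] using hnest (ι x) (pos x) j (Fin.le_def.mpr (hjpos ▸ hle))
  · obtain ⟨j, hj, hjpos⟩ := hpos_of_eq x y h
    rw [← hpos x, ← hj, Fin.ext (heq.trans hjpos.symm)]

theorem even_ring_perfect_general {V : Type} [Fintype V]
    (k : ℕ) (hke : Even k)
    (R : SimpleGraph V) (hR : IsRing R k) :
    IsPerfect R := by
  obtain ⟨X, hX⟩ := hR
  obtain ⟨ι, rk, hbag, hnest, hrk⟩ := hX.exists_bag_rank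
  have h2 : 2 ∣ k := even_iff_two_dvd.mp hke
  refine isPerfect_of_nested_bags R ι (fun i => decide (ZMod.castHom h2 (ZMod 2) i = 0)) rk
    (fun x y hxy hside => ?_) hnest hrk
  rcases hbag x y hxy with h | h | h
  · rw [h] at hside
    exact (decide_castHom_add_one_ne h2 (ι x - 1) (by rwa [sub_add_cancel])).elim
  · exact h.symm
  · rw [h] at hside
    exact (decide_castHom_add_one_ne h2 (ι x) hside.symm).elim

/-- Every even ring is perfect: if `k ≥ 4` is even and `R` is a `k`-ring, then
every induced subgraph of `R` has chromatic number equal to its clique number. -/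
theorem even_ring_perfect {V : Type} [Fintype V]
    (k : ℕ) (hk : 4 ≤ k) (hke : Even k)
    (R : SimpleGraph V) (hR : IsRing R k) :
    IsPerfect R :=
  even_ring_perfect_general k hke R hR
end

section
/- Let k ≥ 5 be an odd integer and let n be a positive integer. Then f_k(n) = n + ⌈(2·⌊n/2⌋)/(k−1)⌉. -/
open SimpleGraph

lemma div_aux (d a b : ℕ) (hd : 0 < d) (hb : b < d) : (d * a + b) / d = a := by
  rw [Nat.mul_add_div hd, Nat.div_eq_of_lt hb, add_zero]

/-- For odd `k ≥ 5` and `n ≥ 1`, `f_k(n) = n + ⌈(2⌊n/2⌋)/(k-1)⌉`. -/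
theorem ringF_eq (k : ℕ) (hk : 5 ≤ k) (hko : Odd k) (n : ℕ) (hn : 0 < n) :
    ringF k n = n + (2 * (n / 2) + (k - 2)) / (k - 1) := by
  obtain ⟨t, ht⟩ := hko
  have hk' : k = 2 * t + 1 := by omega
  subst hk'
  have ht2 : 2 ≤ t := by omega
  have e1 : 2 * t + 1 - 1 = 2 * t := by omega
  have e2 : 2 * t + 1 - 2 = 2 * t - 1 := by omega
  unfold ringF
  rw [e1, e2]
  set q := n / (2 * t) with hq
  set r := n % (2 * t) with hr
  have hnr : 2 * t * q + r = n := Nat.div_add_mod n (2 * t)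
  have hrlt : r < 2 * t := Nat.mod_lt _ (by omega)
  have heven : 2 * t * q = 2 * (t * q) := by ring
  have hpar : n % 2 = r % 2 := by omega
  have hA : (2 * t + 1) * n = 2 * t * (n + q) + r := by
    have h1 : 2 * t * (n + q) = 2 * t * n + 2 * t * q := by ring
    have h2 : (2 * t + 1) * n = 2 * t * n + n := by ring
    omega
  by_cases hr1 : r ≤ 1
  · rw [if_pos hr1]
    have hA' : (2 * t + 1) * n / (2 * t) = n + q := by
      rw [hA, div_aux _ _ _ (by omega) hrlt]
    have hC : (2 * (n / 2) + (2 * t - 1)) / (2 * t) = q := by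
      have hnum : 2 * (n / 2) + (2 * t - 1) = 2 * t * q + (2 * t - 1) := by omega
      rw [hnum, div_aux _ _ _ (by omega) (by omega)]
    rw [hA', hC]
  · rw [if_neg hr1]
    have hB : ((2 * t + 1) * n + (2 * t - 1)) / (2 * t) = n + q + 1 := by
      have h1 : 2 * t * (n + q + 1) = 2 * t * (n + q) + 2 * t := by ring
      have hnum : (2 * t + 1) * n + (2 * t - 1) = 2 * t * (n + q + 1) + (r - 1) := by omega
      rw [hnum, div_aux _ _ _ (by omega) (by omega)]
    have hC : (2 * (n / 2) + (2 * t - 1)) / (2 * t) = q + 1 := by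
      have h1 : 2 * t * (q + 1) = 2 * t * q + 2 * t := by ring
      have hnum : 2 * (n / 2) + (2 * t - 1) = 2 * t * (q + 1) + (r - n % 2 - 1) := by omega
      rw [hnum, div_aux _ _ _ (by omega) (by omega)]
    rw [hB, hC]
    omega
end

section
/- Let k ≥ 5 be an odd integer. Then every k-hyperhole H satisfies χ(H) ≤ f_k(ω(H)). -/
open SimpleGraph

private lemma exists_phi (s : ℕ → ℕ) :
    ∀ (k D : ℕ), D ≤ ∑ j ∈ Finset.range k, s j →
      ∃ φ : ℕ → ℕ, (∀ j, φ j ≤ s j) ∧ ∑ j ∈ Finset.range k, φ j = D := by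
  intro k
  induction k with
  | zero =>
      intro D hD
      simp only [Finset.range_zero, Finset.sum_empty, Nat.le_zero] at hD
      exact ⟨fun _ => 0, fun _ => Nat.zero_le _, by simp [hD]⟩
  | succ n ih =>
      intro D hD
      rw [Finset.sum_range_succ] at hD
      set M := ∑ j ∈ Finset.range n, s j with hM
      have h1 : min D M ≤ M := min_le_right _ _
      have h2 : min D M ≤ D := min_le_left _ _
      have hrest : D - min D M ≤ s n := by
        rcases le_total D M with h | h
        · rw [min_eq_left h]; omega
        · rw [min_eq_right h]; omega
      obtain ⟨φ, hφ, hsum⟩ := ih (min D M) h1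
      refine ⟨Function.update φ n (D - min D M), ?_, ?_⟩
      · intro j
        by_cases h : j = n
        · rw [h, Function.update_self]; exact hrest
        · rw [Function.update_of_ne h]; exact hφ j
      · rw [Finset.sum_range_succ, Function.update_self,
          Finset.sum_congr rfl
            (fun j hj => Function.update_of_ne (Finset.mem_range.mp hj).ne _ _), hsum]
        omega

private lemma ringF_facts (k ω A : ℕ) (hk : 5 ≤ k) (hko : Odd k) (hω : 2 ≤ ω)
    (hA : 2 * A ≤ k * ω) :
    ω ≤ ringF k ω ∧ 1 ≤ ringF k ω ∧ 2 * A + ringF k ω ≤ k * ringF k ω := by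
  obtain ⟨d, hkd⟩ : ∃ d, k = d + 1 := ⟨k - 1, by omega⟩
  subst hkd
  have hd0 : 0 < d := by omega
  simp only [ringF, Nat.add_sub_cancel]
  obtain ⟨q, r, hω2, hrd, hr⟩ : ∃ q r, ω = d * q + r ∧ r < d ∧ ω % d = r :=
    ⟨ω / d, ω % d, (Nat.div_add_mod ω d).symm, Nat.mod_lt _ hd0, rfl⟩
  rw [hr]
  have hkω : (d + 1) * ω = d * (ω + q) + r := by nlinarith [hω2]
  have hdq : d * (ω + q) = d * ω + d * q := by ring
  by_cases h : r ≤ 1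
  · rw [if_pos h]
    have ht : (d + 1) * ω / d = ω + q := by
      rw [hkω, Nat.mul_add_div hd0, Nat.div_eq_of_lt hrd]
      exact Nat.add_zero _
    rw [ht]
    have hkt : (d + 1) * (ω + q) = d * (ω + q) + (ω + q) := by ring
    rcases Nat.lt_or_ge r 1 with h0 | h1
    · refine ⟨by omega, by omega, by omega⟩
    · -- r = 1 : parity
      have hko' := hko
      obtain ⟨m, hm⟩ := hko'
      have hdm : d = 2 * m := by omega
      have hωodd : Odd ω := by
        refine ⟨m * q, ?_⟩
        have e1 : d * q = 2 * (m * q) := by rw [hdm]; ring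
        omega
      obtain ⟨c, hc⟩ := Odd.mul hko hωodd
      refine ⟨by omega, by omega, by omega⟩
  · rw [if_neg h]
    have hP2 : (d + 1) * ω + (d + 1 - 2) = d * (ω + q + 1) + (r - 1) := by
      have e1 : d * (ω + q + 1) = d * (ω + q) + d := by ring
      omega
    have ht : ((d + 1) * ω + (d + 1 - 2)) / d = ω + q + 1 := by
      rw [hP2, Nat.mul_add_div hd0, Nat.div_eq_of_lt (by omega : r - 1 < d)]
    rw [ht]
    have hkt : (d + 1) * (ω + q + 1) = d * (ω + q) + d + (ω + q + 1) := by ring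
    refine ⟨by omega, by omega, by omega⟩

/-- For odd `k ≥ 5`, every `k`-hyperhole `H` satisfies `χ(H) ≤ f_k(ω(H))`. -/
theorem hyperhole_chromaticNumber_le {V : Type} [Fintype V]
    (k : ℕ) (hk : 5 ≤ k) (hko : Odd k)
    (H : SimpleGraph V) (hH : IsHyperhole H k) :
    H.chromaticNumber ≤ (ringF k H.cliqueNum : ℕ∞) := by
  classical
  obtain ⟨X, hne, huniq, hclq, hcomp, hanti⟩ := hH
  haveI : NeZero k := ⟨by omega⟩
  choose part hmem hpuniq using huniq
  letI instF : ∀ i : ZMod k, Fintype ↥(X i) := fun i => (Set.toFinite (X i)).fintype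
  set a : ZMod k → ℕ := fun i => (X i).toFinset.card with ha
  -- basic facts about parts
  have hone : (1 : ZMod k) ≠ 0 := by
    intro h01
    have := congrArg ZMod.val h01
    rw [ZMod.val_one'' (by omega : k ≠ 1), ZMod.val_zero] at this
    exact one_ne_zero this
  have hclique2 : ∀ i : ZMod k, a i + a (i + 1) ≤ H.cliqueNum := by
    intro i
    have hdisj : Disjoint (X i).toFinset (X (i + 1)).toFinset := by
      rw [Finset.disjoint_left]
      intro x hx hx'
      rw [Set.mem_toFinset] at hx hx'
      have h1 : i = part x := hpuniq x i hx
      have h2 : i + 1 = part x := hpuniq x (i + 1) hx'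
      exact hone (left_eq_add.mp (h1.trans h2.symm))
    have hcl : H.IsClique (↑((X i).toFinset ∪ (X (i + 1)).toFinset) : Set V) := by
      rw [Finset.coe_union, Set.coe_toFinset, Set.coe_toFinset]
      intro x hx y hy hxy
      rcases hx with hx | hx <;> rcases hy with hy | hy
      · exact hclq i hx hy hxy
      · exact hcomp (i + 1) y hy x (Or.inl (by rwa [add_sub_cancel_right])) |>.symm
      · exact hcomp (i + 1) x hx y (Or.inl (by rwa [add_sub_cancel_right]))
      · exact hclq (i + 1) hx hy hxy
    have hcard := SimpleGraph.IsClique.card_le_cliqueNum (tc := hcl)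
    rwa [Finset.card_union_of_disjoint hdisj] at hcard
  have hapos : ∀ i : ZMod k, 1 ≤ a i :=
    fun i => Finset.card_pos.mpr (Set.toFinset_nonempty.mpr (hne i))
  obtain ⟨ω, hωeq⟩ : ∃ w, H.cliqueNum = w := ⟨_, rfl⟩
  obtain ⟨t, hteq⟩ : ∃ u, ringF k ω = u := ⟨_, rfl⟩
  rw [hωeq, hteq]
  rw [hωeq] at hclique2
  have hω2 : 2 ≤ ω := by
    have e0 := hclique2 0
    rw [zero_add] at e0
    have := hapos 0; have := hapos 1
    omega
  -- the sequence a' over ℕ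
  set a' : ℕ → ℕ := fun n => a ((n : ZMod k)) with ha'
  have ha'val : ∀ i : ZMod k, a' i.val = a i := fun i => by
    simp only [ha', ZMod.natCast_rightInverse i]
  have ha'succ : ∀ n : ℕ, a' (n + 1) = a ((n : ZMod k) + 1) := by
    intro n; simp only [ha', Nat.cast_add, Nat.cast_one]
  have hedgeω : ∀ n : ℕ, a' n + a' (n + 1) ≤ ω := fun n => by
    rw [ha'succ]; exact hclique2 _
  have ha'k : a' k = a' 0 := by simp [ha']
  set A := ∑ j ∈ Finset.range k, a' j with hA
  have hshiftsum : ∑ j ∈ Finset.range k, a' (j + 1) = A := by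
    have h1 := Finset.sum_range_succ' a' k
    have h2 := Finset.sum_range_succ a' k
    rw [h1, ha'k] at h2
    omega
  have h2A : 2 * A ≤ k * ω := by
    have hs : ∑ j ∈ Finset.range k, (a' j + a' (j + 1)) ≤ ∑ _j ∈ Finset.range k, ω :=
      Finset.sum_le_sum (fun j _ => hedgeω j)
    rw [Finset.sum_add_distrib, hshiftsum, Finset.sum_const, Finset.card_range,
      smul_eq_mul] at hs
    omega
  obtain ⟨hωt, ht1, hkt⟩ := hteq ▸ ringF_facts k ω A hk hko hω2 h2A
  haveI : NeZero t := ⟨by omega⟩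
  have hedget : ∀ n : ℕ, a' n + a' (n + 1) ≤ t := fun n => le_trans (hedgeω n) hωt
  -- slack and phi
  set s : ℕ → ℕ := fun n => t - (a' n + a' (n + 1)) with hs
  have hssum : t ≤ ∑ j ∈ Finset.range k, s j := by
    have he : ∀ j ∈ Finset.range k, s j + (a' j + a' (j + 1)) = t := by
      intro j _; have := hedget j; simp only [hs]; omega
    have h1 : ∑ j ∈ Finset.range k, (s j + (a' j + a' (j + 1)))
        = ∑ _j ∈ Finset.range k, t := Finset.sum_congr rfl he
    rw [Finset.sum_add_distrib, Finset.sum_add_distrib, hshiftsum, Finset.sum_const,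
      Finset.card_range, smul_eq_mul] at h1
    omega
  set D := (t - A % t) % t with hD
  have ht0 : 0 < t := by omega
  have hDlt : D < t := Nat.mod_lt _ ht0
  have hdvdAD : t ∣ (A + D) := by
    by_cases hz : A % t = 0
    · have : D = 0 := by rw [hD, hz, Nat.sub_zero, Nat.mod_self]
      rw [this, Nat.add_zero]
      exact Nat.dvd_of_mod_eq_zero hz
    · have hAmt : A % t < t := Nat.mod_lt _ ht0
      have hDval : D = t - A % t := by rw [hD]; exact Nat.mod_eq_of_lt (by omega)
      have hdm := Nat.div_add_mod A t
      have hmul : t * (A / t + 1) = t * (A / t) + t := by ring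
      exact ⟨A / t + 1, by omega⟩
  obtain ⟨φ, hφ, hφsum⟩ := exists_phi s k D (by omega)
  set b : ℕ → ℕ := fun n => a' n + φ n with hb
  have hbedge : ∀ n : ℕ, b n + a' (n + 1) ≤ t := by
    intro n
    have h1 := hφ n
    have h2 := hedget n
    simp only [hb]; simp only [hs] at h1; omega
  set start : ℕ → ℕ := fun n => ∑ j ∈ Finset.range n, b j with hstart
  have hstartk : t ∣ start k := by
    have : start k = A + D := by
      simp only [hstart, hb, Finset.sum_add_distrib, ← hA, hφsum]
    rw [this]; exact hdvdAD
  have hstartsucc : ∀ n : ℕ, start (n + 1) = start n + b n :=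
    fun n => Finset.sum_range_succ b n
  -- the two non-equality lemmas
  have NEQ1 : ∀ n r r', r < a' n → r' < a' (n + 1) →
      ((start n + r : ℕ) : ZMod t) ≠ ((start (n + 1) + r' : ℕ) : ZMod t) := by
    intro n r r' hr hr' heq
    rw [ZMod.natCast_eq_natCast_iff, hstartsucc, add_assoc] at heq
    have h2 : r ≡ b n + r' [MOD t] := Nat.ModEq.add_left_cancel' _ heq
    have hba : a' n ≤ b n := Nat.le_add_right _ _
    have h3 : t ∣ (b n + r' - r) := (Nat.modEq_iff_dvd' (by omega)).mp h2
    have hbe := hbedge n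
    have h4 : 0 < b n + r' - r := by omega
    have h5 := Nat.le_of_dvd h4 h3
    omega
  have NEQ0 : ∀ n r r', r < a' n → r' < a' n →
      ((start n + r : ℕ) : ZMod t) = ((start n + r' : ℕ) : ZMod t) → r = r' := by
    intro n r r' hr hr' heq
    rw [ZMod.natCast_eq_natCast_iff] at heq
    have h2 : r ≡ r' [MOD t] := Nat.ModEq.add_left_cancel' _ heq
    have hat : a' n ≤ t := by have := hedget n; omega
    have h3 : r % t = r' % t := h2
    rw [Nat.mod_eq_of_lt (by omega), Nat.mod_eq_of_lt (by omega)] at h3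
    exact h3
  -- rank within parts
  set rk : ZMod k → V → ℕ := fun i v =>
    if h : v ∈ X i then ((Fintype.equivFin ↥(X i)) ⟨v, h⟩).val else 0 with hrk
  have hrklt : ∀ (i : ZMod k) (v : V), v ∈ X i → rk i v < a i := by
    intro i v h
    have hcard : a i = Fintype.card ↥(X i) := Set.toFinset_card _
    rw [hrk]
    simp only [dif_pos h]
    rw [hcard]
    exact ((Fintype.equivFin ↥(X i)) ⟨v, h⟩).isLt
  have hrkinj : ∀ (i : ZMod k) (u v : V), u ∈ X i → v ∈ X i → rk i u = rk i v → u = v := by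
    intro i u v hu hv h
    rw [hrk] at h
    simp only [dif_pos hu, dif_pos hv] at h
    have := (Fintype.equivFin ↥(X i)).injective (Fin.val_injective h)
    exact congrArg Subtype.val this
  -- the coloring
  set C : V → ZMod t := fun v => ((start (part v).val + rk (part v) v : ℕ) : ZMod t) with hC
  have key : ∀ p q : V, part q = part p + 1 → C p ≠ C q := by
    intro p q hpq
    have hn : (part p).val < k := ZMod.val_lt _
    have hvq : (part q).val = ((part p).val + 1) % k := by
      rw [hpq, ZMod.val_add, ZMod.val_one'' (by omega : k ≠ 1)]
    have hap : a' (part p).val = a (part p) := ha'val _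
    have haq : a' ((part p).val + 1) = a (part q) := by
      rw [ha'succ, ZMod.natCast_rightInverse (part p), ← hpq]
    have hrp : rk (part p) p < a' (part p).val := hap ▸ hrklt _ _ (hmem p)
    have hrq : rk (part q) q < a' ((part p).val + 1) := haq ▸ hrklt _ _ (hmem q)
    by_cases hw : (part p).val + 1 < k
    · have hq' : (part q).val = (part p).val + 1 := by rw [hvq, Nat.mod_eq_of_lt hw]
      intro hCeq
      apply NEQ1 (part p).val (rk (part p) p) (rk (part q) q) hrp hrq
      rw [hC] at hCeq
      simp only at hCeq
      rw [← hq']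
      exact hCeq
    · have hk1 : (part p).val + 1 = k := by omega
      have hq' : (part q).val = 0 := by rw [hvq, hk1, Nat.mod_self]
      intro hCeq
      apply NEQ1 (part p).val (rk (part p) p) (rk (part q) q) hrp hrq
      rw [hk1]
      have h0 : ((start k + rk (part q) q : ℕ) : ZMod t)
          = ((rk (part q) q : ℕ) : ZMod t) := by
        push_cast
        rw [(ZMod.natCast_eq_zero_iff _ _).mpr hstartk, zero_add]
      rw [h0]
      rw [hC] at hCeq
      simp only at hCeq
      rw [hq'] at hCeq
      have hst0 : start 0 = 0 := by simp [hstart]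
      rw [hst0, Nat.zero_add] at hCeq
      exact hCeq
  have hvalid : ∀ u v : V, H.Adj u v → C u ≠ C v := by
    intro u v hadj
    have hv3 : v ∈ X (part u - 1) ∪ X (part u) ∪ X (part u + 1) := by
      by_contra h
      exact hanti (part u) u (hmem u) v h hadj
    rcases hv3 with (h | h) | h
    · -- v ∈ X (part u - 1)
      have hpv : part v = part u - 1 := (hpuniq v _ h).symm
      have : part u = part v + 1 := by rw [hpv]; ring
      exact (key v u this).symm
    · -- same part
      have hpv : part u = part v := hpuniq v _ h
      intro hCeq
      apply hadj.ne
      rw [hC] at hCeq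
      simp only at hCeq
      rw [← hpv] at hCeq
      have h1 : rk (part u) u < a' (part u).val := (ha'val _) ▸ hrklt _ _ (hmem u)
      have h2 : rk (part u) v < a' (part u).val := (ha'val _) ▸ hrklt _ _ h
      exact hrkinj (part u) u v (hmem u) h (NEQ0 _ _ _ h1 h2 hCeq)
    · -- v ∈ X (part u + 1)
      have hpv : part v = part u + 1 := (hpuniq v _ h).symm
      exact key u v hpv
  have hcolor : H.Colorable t := by
    have hc := (SimpleGraph.Coloring.mk C (fun hadj => hvalid _ _ hadj)).colorable
    rwa [ZMod.card] at hc
  exact_mod_cast hcolor.chromaticNumber_le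
end

section
/- Let k ≥ 5 be an odd integer. Then for every integer n ≥ 2 there exists a k-hyperhole H with ω(H) = n and χ(H) = f_k(n). -/
open SimpleGraph

/-!
Write `k = 2c + 1` and cut `0, 1, …, ⌊kn/2⌋ - 1` into `k` consecutive blocks
`[⌊in/2⌋, ⌊(i+1)n/2⌋)`; blowing up the `k`-cycle along these blocks gives a `k`-hyperhole.
Two cyclically consecutive blocks contain at most `n` vertices, and the blocks `0, 1` exactly
`n`, so `ω = n`. An independent set meets at most `c` blocks, each at most once, so
`χ ≥ ⌈⌊kn/2⌋/c⌉`, and this number is `f_k(n)`. Conversely, colouring the vertices in their order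
cyclically with `f_k(n) > n` colours, skipping one colour at each of the first few block
boundaries, is proper.
-/

open Finset

lemma ZMod.natCast_ne_zero_of_lt {k m : ℕ} (hm : 0 < m) (hmk : m < k) : (m : ZMod k) ≠ 0 := by
  rw [Ne, ZMod.natCast_eq_zero_iff]
  exact Nat.not_dvd_of_pos_of_lt hm hmk

lemma Nat.mod_ne_mod_of_lt_of_lt {x y f m : ℕ} (h₁ : x + m * f < y) (h₂ : y < x + (m + 1) * f) :
    x % f ≠ y % f := fun h =>
  Nat.not_dvd_of_lt_of_lt_mul_succ (n := f) (k := m) (m := y - x)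
    (by rw [mul_comm]; omega) (by rw [mul_comm]; omega)
    (Nat.dvd_of_mod_eq_zero (Nat.sub_mod_eq_zero_of_mod_eq h.symm))

lemma eq_or_eq_add_one_or_wrap_of_natCast {k a b : ℕ} (hab : a ≤ b) (hb : b < k)
    (h : (a : ZMod k) = b ∨ (a : ZMod k) = b + 1 ∨ (b : ZMod k) = a + 1) :
    b = a ∨ b = a + 1 ∨ (a = 0 ∧ b + 1 = k) := by
  have ha : a < k := hab.trans_lt hb
  simp only [← Nat.cast_add_one, ZMod.natCast_eq_natCast_iff', Nat.mod_eq_of_lt ha,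
    Nat.mod_eq_of_lt hb] at h
  rcases (Nat.succ_le_of_lt hb).lt_or_eq with hb1 | hb1
  · rw [Nat.mod_eq_of_lt (show b + 1 < k from hb1),
      Nat.mod_eq_of_lt (show a + 1 < k by omega)] at h
    omega
  · rw [show b + 1 = k from hb1, Nat.mod_self] at h
    rcases (Nat.succ_le_of_lt ha).lt_or_eq with ha1 | ha1
    · rw [Nat.mod_eq_of_lt (show a + 1 < k from ha1)] at h
      omega
    · omega

namespace SimpleGraph

variable {V : Type} {k : ℕ}

def cycleBlowup (k : ℕ) (p : V → ZMod k) : SimpleGraph V :=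
  fromRel fun u v => p u = p v ∨ p u = p v + 1

variable {p : V → ZMod k}

lemma cycleBlowup_adj {u v : V} :
    (cycleBlowup k p).Adj u v ↔ u ≠ v ∧ (p u = p v ∨ p u = p v + 1 ∨ p v = p u + 1) := by
  rw [cycleBlowup, fromRel_adj]
  constructor <;> rintro ⟨huv, h⟩ <;> refine ⟨huv, ?_⟩ <;> aesop

lemma isHyperhole_cycleBlowup (hk : 1 < k) (hp : Function.Surjective p) :
    IsHyperhole (cycleBlowup k p) k := by
  have hne : (1 : ZMod k) ≠ 0 := by simpa using ZMod.natCast_ne_zero_of_lt one_pos hk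
  refine ⟨fun i => p ⁻¹' {i}, fun i => hp i, fun v => ⟨p v, rfl, fun _ h => h.symm⟩,
    ?_, ?_, ?_⟩
  · intro i u hu v hv huv
    exact cycleBlowup_adj.mpr ⟨huv, Or.inl (hu.trans hv.symm)⟩
  · rintro i u (hu : p u = i) v (hv | hv) <;> simp only [Set.mem_preimage,
      Set.mem_singleton_iff] at hv <;> refine cycleBlowup_adj.mpr ⟨?_, ?_⟩
    · rintro rfl; exact hne (by linear_combination hv - hu)
    · right; left; rw [hu, hv]; ring
    · rintro rfl; exact hne (by linear_combination hu - hv)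
    · right; right; rw [hu, hv]
  · rintro i u (hu : p u = i) v hv hadj
    obtain ⟨-, h | h | h⟩ := cycleBlowup_adj.mp hadj <;> apply hv <;>
      simp only [Set.mem_union, Set.mem_preimage, Set.mem_singleton_iff]
    · exact Or.inl (Or.inr (h.symm.trans hu))
    · exact Or.inl (Or.inl (by rw [← hu, h]; ring))
    · exact Or.inr (by rw [h, hu])

lemma exists_forall_eq_or_eq_add_one_of_isClique (hk : 4 ≤ k) {s : Set V}
    (hs : (cycleBlowup k p).IsClique s) : ∃ i, ∀ v ∈ s, p v = i ∨ p v = i + 1 := by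
  have h1 : ((1 : ℕ) : ZMod k) ≠ 0 := ZMod.natCast_ne_zero_of_lt one_pos (by omega)
  have h2 : ((2 : ℕ) : ZMod k) ≠ 0 := ZMod.natCast_ne_zero_of_lt two_pos (by omega)
  have h3 : ((3 : ℕ) : ZMod k) ≠ 0 := ZMod.natCast_ne_zero_of_lt three_pos (by omega)
  push_cast at h1 h2 h3
  have close : ∀ u ∈ s, ∀ v ∈ s, p u = p v ∨ p u = p v + 1 ∨ p v = p u + 1 := by
    intro u hu v hv
    by_cases huv : u = v
    · exact Or.inl (congrArg p huv)
    · exact (cycleBlowup_adj.mp (hs hu hv huv)).2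
  rcases s.eq_empty_or_nonempty with rfl | ⟨w, hw⟩
  · exact ⟨0, by simp⟩
  by_cases hlow : ∃ u ∈ s, p u = p w - 1
  · obtain ⟨u, hu, hpu⟩ := hlow
    refine ⟨p w - 1, fun v hv => ?_⟩
    rcases close v hv w hw with h | h | h
    · exact Or.inr (by rw [h]; ring)
    · exfalso
      rcases close u hu v hv with h' | h' | h' <;> rw [hpu, h] at h'
      · exact h2 (by linear_combination -h')
      · exact h3 (by linear_combination -h')
      · exact h1 (by linear_combination h')
    · exact Or.inl (by rw [h]; ring)
  · push Not at hlow
    refine ⟨p w, fun v hv => ?_⟩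
    rcases close v hv w hw with h | h | h
    · exact Or.inl h
    · exact Or.inr h
    · exact absurd (by rw [h]; ring) (hlow v hv)

/-- An independent set meets each label at most once, and its labels `T` are disjoint from
`T + 1`. -/
lemma two_mul_card_le_of_isIndepSet_cycleBlowup (hk : 1 < k) {s : Finset V}
    (hs : (cycleBlowup k p).IsIndepSet s) : 2 * #s ≤ k := by
  classical
  have : NeZero k := ⟨by omega⟩
  have hinj : Set.InjOn p s := fun u hu v hv h => by
    by_contra huv
    exact hs hu hv huv (cycleBlowup_adj.mpr ⟨huv, Or.inl h⟩)
  have hdisj : Disjoint (s.image p) ((s.image p).image (· + 1)) := by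
    rw [Finset.disjoint_left]
    simp only [mem_image]
    rintro _ ⟨u, hu, rfl⟩ ⟨_, ⟨v, hv, rfl⟩, huv⟩
    have hne : v ≠ u := fun h => ZMod.natCast_ne_zero_of_lt one_pos hk (by simpa [h] using huv)
    exact hs hv hu hne (cycleBlowup_adj.mpr ⟨hne, Or.inr (Or.inr huv.symm)⟩)
  calc 2 * #s = #(s.image p) + #((s.image p).image (· + 1)) := by
        rw [card_image_of_injective _ (add_left_injective 1), card_image_of_injOn hinj]; ring
    _ = #(s.image p ∪ (s.image p).image (· + 1)) := (card_union_of_disjoint hdisj).symm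
    _ ≤ Fintype.card (ZMod k) := card_le_univ _
    _ = k := ZMod.card k

variable [Fintype V]

lemma card_le_mul_of_colorable {G : SimpleGraph V} {a m : ℕ}
    (ha : ∀ s : Finset V, G.IsIndepSet s → s.card ≤ a) (hG : G.Colorable m) :
    Fintype.card V ≤ m * a := by
  classical
  obtain ⟨C⟩ := hG
  calc Fintype.card V = ∑ j : Fin m, #{v | C v = j} :=
        card_eq_sum_card_fiberwise fun v _ => mem_univ (C v)
    _ ≤ ∑ _j : Fin m, a := sum_le_sum fun j _ => ha _ <| by
        simpa [Coloring.colorClass] using C.isIndepSet_colorClass j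
    _ = m * a := by simp

lemma le_cliqueNum_cycleBlowup (hk : 1 < k) (i : ZMod k) :
    #{v | p v = i} + #{v | p v = i + 1} ≤ (cycleBlowup k p).cliqueNum := by
  classical
  have hne : i ≠ i + 1 := fun h => ZMod.natCast_ne_zero_of_lt one_pos hk (by simpa using h)
  have hclique : (cycleBlowup k p).IsClique
      (({v | p v = i ∨ p v = i + 1} : Finset V) : Set V) := by
    intro u hu v hv huv
    refine cycleBlowup_adj.mpr ⟨huv, ?_⟩
    simp only [coe_filter, mem_univ, true_and, Set.mem_ofPred_eq] at hu hv
    rcases hu with hu | hu <;> rcases hv with hv | hv <;> rw [hu, hv] <;> simp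
  calc _ = #({v | p v = i ∨ p v = i + 1} : Finset V) := by
        rw [filter_or, card_union_of_disjoint]
        exact disjoint_filter.mpr fun v _ (h : p v = i) h' => hne (h.symm.trans h')
    _ ≤ _ := hclique.card_le_cliqueNum

lemma cliqueNum_cycleBlowup_le (hk : 4 ≤ k) {n : ℕ}
    (hn : ∀ i, #{v | p v = i} + #{v | p v = i + 1} ≤ n) :
    (cycleBlowup k p).cliqueNum ≤ n := by
  classical
  obtain ⟨s, hs⟩ := (cycleBlowup k p).exists_isNClique_cliqueNum
  obtain ⟨i, hi⟩ := exists_forall_eq_or_eq_add_one_of_isClique hk hs.isClique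
  calc _ = #s := hs.card_eq.symm
    _ ≤ #({v | p v = i ∨ p v = i + 1} : Finset V) := card_le_card fun v hv => by
        simpa using hi v hv
    _ ≤ _ := by
        rw [filter_or]
        exact (card_union_le _ _).trans (hn i)

lemma card_le_mul_of_colorable_cycleBlowup (hk : 1 < k) {m : ℕ}
    (hG : (cycleBlowup k p).Colorable m) : Fintype.card V ≤ m * (k / 2) :=
  card_le_mul_of_colorable (fun s hs => by
    have := two_mul_card_le_of_isIndepSet_cycleBlowup hk hs
    omega) hG

end SimpleGraph

/-- `blockIndex n` cuts `ℕ` into the consecutive blocks `[i * n / 2, (i + 1) * n / 2)`; any two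
consecutive blocks together contain exactly `n` numbers. -/
def blockIndex (n v : ℕ) : ℕ := (2 * v + 1) / n

section blockIndex

variable {n i v : ℕ}

lemma le_blockIndex_iff (hn : 0 < n) : i ≤ blockIndex n v ↔ i * n / 2 ≤ v := by
  rw [blockIndex, Nat.le_div_iff_mul_le hn]
  omega

lemma blockIndex_lt_iff (hn : 0 < n) : blockIndex n v < i ↔ v < i * n / 2 :=
  not_le.symm.trans ((le_blockIndex_iff hn).not.trans not_le)

lemma blockIndex_mono (n : ℕ) {u v : ℕ} (h : u ≤ v) : blockIndex n u ≤ blockIndex n v :=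
  Nat.div_le_div_right (by omega)

lemma card_filter_blockIndex_lt {N : ℕ} (hn : 0 < n) (i : ℕ) :
    #{v : Fin N | blockIndex n v < i} = min N (i * n / 2) := by
  simp_rw [blockIndex_lt_iff hn]
  exact Fin.card_filter_val_lt

lemma card_filter_blockIndex_eq {N : ℕ} (hn : 0 < n) (i : ℕ) :
    #{v : Fin N | blockIndex n v = i} = min N ((i + 1) * n / 2) - min N (i * n / 2) := by
  have hsplit : ({v | blockIndex n v = i} : Finset (Fin N)) =
      ({v | blockIndex n v < i + 1} : Finset (Fin N)) \
        ({v | blockIndex n v < i} : Finset (Fin N)) := by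
    ext v
    simp only [mem_filter, mem_univ, true_and, mem_sdiff]
    omega
  rw [hsplit, card_sdiff_of_subset (monotone_filter_right _ fun v h => by omega),
    card_filter_blockIndex_lt hn, card_filter_blockIndex_lt hn]

end blockIndex

lemma ringF_eq_ceilDiv {c : ℕ} (hc : 0 < c) (n : ℕ) :
    ringF (2 * c + 1) n = (2 * c + 1) * n / 2 ⌈/⌉ c := by
  obtain ⟨q, r, hr, rfl⟩ : ∃ q r, r < 2 * c ∧ n = 2 * c * q + r :=
    ⟨n / (2 * c), n % (2 * c), Nat.mod_lt _ (by omega), (Nat.div_add_mod n (2 * c)).symm⟩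
  set M := 2 * c * q + r + q
  have hkn : (2 * c + 1) * (2 * c * q + r) = 2 * c * M + r := by ring
  have hN : (2 * c + 1) * (2 * c * q + r) / 2 = c * M + r / 2 := by
    rw [hkn, show 2 * c * M = 2 * (c * M) by ring]; omega
  have hrc : (r / 2 + c - 1) / c = if r ≤ 1 then 0 else 1 := by
    split_ifs
    · exact Nat.div_eq_of_lt (by omega)
    · exact Nat.div_eq_of_lt_le (by omega) (by omega)
  rw [ringF, Nat.ceilDiv_eq_add_pred_div, hN, show 2 * c + 1 - 1 = 2 * c by omega,
    show 2 * c + 1 - 2 = 2 * c - 1 by omega, Nat.mul_add_mod, Nat.mod_eq_of_lt hr, hkn,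
    show c * M + r / 2 + c - 1 = c * M + (r / 2 + c - 1) by omega, Nat.mul_add_div hc, hrc]
  split_ifs with h
  · rw [Nat.mul_add_div (by omega), Nat.div_eq_of_lt hr]
  · rw [add_assoc, Nat.mul_add_div (by omega), Nat.div_eq_of_lt_le (k := 1) (by omega) (by omega)]

lemma lt_ceilDiv_iff {a b n : ℕ} (hb : 0 < b) : n < a ⌈/⌉ b ↔ b * n < a := by
  rw [← not_le, ceilDiv_le_iff_le_mul hb, not_le]

def blockHyperhole (k n : ℕ) : SimpleGraph (Fin (k * n / 2)) :=
  cycleBlowup k fun v => (blockIndex n v : ZMod k)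

section blockHyperhole

variable {k n : ℕ}

lemma blockIndex_lt (hn : 0 < n) (v : Fin (k * n / 2)) : blockIndex n v < k :=
  (blockIndex_lt_iff hn).mpr v.isLt

lemma natCast_blockIndex_eq_iff [NeZero k] (hn : 0 < n) (v : Fin (k * n / 2)) (i : ZMod k) :
    (blockIndex n v : ZMod k) = i ↔ blockIndex n v = i.val := by
  constructor
  · rintro rfl
    exact (ZMod.val_cast_of_lt (blockIndex_lt hn v)).symm
  · rintro h
    rw [h, ZMod.natCast_zmod_val]

lemma card_blockHyperhole_fiber [NeZero k] (hn : 0 < n) (i : ZMod k) :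
    #{v : Fin (k * n / 2) | (blockIndex n v : ZMod k) = i} =
      (i.val + 1) * n / 2 - i.val * n / 2 := by
  have hle : (i.val + 1) * n / 2 ≤ k * n / 2 :=
    Nat.div_le_div_right (Nat.mul_le_mul_right n (ZMod.val_lt i))
  simp_rw [natCast_blockIndex_eq_iff hn, card_filter_blockIndex_eq hn]
  omega

lemma isHyperhole_blockHyperhole (hk : 1 < k) (hn : 2 ≤ n) :
    IsHyperhole (blockHyperhole k n) k := by
  have : NeZero k := ⟨by omega⟩
  refine isHyperhole_cycleBlowup hk fun i => ?_
  have hstep : ∀ j, j * n / 2 < (j + 1) * n / 2 := fun j => by rw [add_one_mul]; omega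
  have hlt : i.val * n / 2 < k * n / 2 :=
    (hstep _).trans_le (Nat.div_le_div_right (Nat.mul_le_mul_right n (ZMod.val_lt i)))
  refine ⟨⟨i.val * n / 2, hlt⟩, (natCast_blockIndex_eq_iff (by omega) _ i).mpr ?_⟩
  exact le_antisymm (Nat.lt_succ_iff.mp ((blockIndex_lt_iff (by omega)).mpr (hstep _)))
    ((le_blockIndex_iff (by omega)).mpr le_rfl)

lemma card_blockHyperhole_fiber_add_fiber_succ (hk : 1 < k) (hn : 0 < n) (i : ZMod k) :
    #{v : Fin (k * n / 2) | (blockIndex n v : ZMod k) = i} +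
      #{v : Fin (k * n / 2) | (blockIndex n v : ZMod k) = i + 1} ≤ n := by
  have : Fact (1 < k) := ⟨hk⟩
  rw [card_blockHyperhole_fiber hn, card_blockHyperhole_fiber hn, ZMod.val_add, ZMod.val_one]
  have h1 : (i.val + 1) * n = i.val * n + n := by ring
  have h2 : (i.val + 1 + 1) * n = i.val * n + 2 * n := by ring
  rcases (Nat.succ_le_of_lt (ZMod.val_lt i)).lt_or_eq with h | h
  · rw [Nat.mod_eq_of_lt (show i.val + 1 < k from h)]
    omega
  · rw [show i.val + 1 = k from h, Nat.mod_self] at *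
    omega

lemma cliqueNum_blockHyperhole (hk : 4 ≤ k) (hn : 2 ≤ n) :
    (blockHyperhole k n).cliqueNum = n := by
  have : NeZero k := ⟨by omega⟩
  refine le_antisymm (cliqueNum_cycleBlowup_le hk
    (card_blockHyperhole_fiber_add_fiber_succ (by omega) (by omega))) ?_
  calc n = #{v : Fin (k * n / 2) | (blockIndex n v : ZMod k) = 0} +
        #{v : Fin (k * n / 2) | (blockIndex n v : ZMod k) = 0 + 1} := by
        have : Fact (1 < k) := ⟨by omega⟩
        rw [card_blockHyperhole_fiber (by omega), card_blockHyperhole_fiber (by omega), zero_add,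
          ZMod.val_zero, ZMod.val_one]
        omega
    _ ≤ _ := le_cliqueNum_cycleBlowup (by omega) 0

lemma colorable_blockHyperhole {c n : ℕ} (hn : n < (2 * c + 1) * n / 2 ⌈/⌉ c) :
    (blockHyperhole (2 * c + 1) n).Colorable ((2 * c + 1) * n / 2 ⌈/⌉ c) := by
  set N := (2 * c + 1) * n / 2 with hNdef
  set f := N ⌈/⌉ c with hfdef
  have hc : 0 < c := Nat.pos_of_ne_zero (by rintro rfl; simp [f] at hn)
  have hn0 : 0 < n := Nat.pos_of_ne_zero (by rintro rfl; simp [hfdef, hNdef] at hn)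
  have hNf : N ≤ c * f := le_smul_ceilDiv hc
  have hfN : c * f < N + c :=
    calc c * f = (N + c - 1) / c * c := by rw [mul_comm, hfdef, Nat.ceilDiv_eq_add_pred_div]
      _ ≤ N + c - 1 := Nat.div_mul_le_self _ _
      _ < N + c := by omega
  have hN : N = c * n + n / 2 := by
    have : (2 * c + 1) * n = 2 * (c * n) + n := by ring
    omega
  set g := c * f - N with hg
  -- Colour the vertices `0, 1, …, N - 1` cyclically with `f > n` colours, inserting a skipped
  -- colour at each of the first `g` block boundaries so that blocks `2c` and `0` do not clash.
  set Φ : Fin N → ℕ := fun v => v + min (blockIndex n v) g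
  suffices key :
      ∀ u v, (blockHyperhole (2 * c + 1) n).Adj u v → u < v → Φ u % f ≠ Φ v % f from
    ⟨Coloring.mk (fun v => ⟨Φ v % f, Nat.mod_lt _ (by omega)⟩) fun {u v} huv h => by
      rcases lt_or_gt_of_ne huv.ne with hlt | hgt
      · exact key u v huv hlt (congrArg Fin.val h)
      · exact key v u huv.symm hgt (congrArg Fin.val h).symm⟩
  intro u v huv hlt
  have hu₁ := (le_blockIndex_iff hn0).mp (le_refl (blockIndex n u))
  have hu₂ := (blockIndex_lt_iff hn0).mp (Nat.lt_add_one (blockIndex n u))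
  have hv₁ := (le_blockIndex_iff hn0).mp (le_refl (blockIndex n v))
  have hv₂ := (blockIndex_lt_iff hn0).mp (Nat.lt_add_one (blockIndex n v))
  have hlt' : (u : ℕ) < v := hlt
  rcases eq_or_eq_add_one_or_wrap_of_natCast (blockIndex_mono n hlt.le)
    (blockIndex_lt hn0 v) (cycleBlowup_adj.mp huv).2 with h | h | ⟨h0, hk⟩
  · have e : (blockIndex n u + 1) * n = blockIndex n u * n + n := by ring
    rw [h] at hv₂
    exact Nat.mod_ne_mod_of_lt_of_lt (m := 0) (by simp only [Φ, h]; omega)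
      (by simp only [Φ, h]; omega)
  · have e : (blockIndex n u + 1 + 1) * n = blockIndex n u * n + 2 * n := by ring
    rw [h] at hv₂
    exact Nat.mod_ne_mod_of_lt_of_lt (m := 0) (by simp only [Φ, h]; omega)
      (by simp only [Φ, h]; omega)
  · have hb : blockIndex n v = 2 * c := by omega
    have hcf : (c - 1 + 1) * f = c * f := by rw [Nat.sub_add_cancel (show 1 ≤ c from hc)]
    have hcf' : (c - 1) * f + f = c * f := by rw [← add_one_mul, hcf]
    rw [h0, zero_add, one_mul] at hu₂
    rw [hb, show 2 * c * n = 2 * (c * n) by ring] at hv₁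
    exact Nat.mod_ne_mod_of_lt_of_lt (m := c - 1) (by simp only [Φ, h0, hb]; omega)
      (by simp only [Φ, h0, hb]; omega)

lemma chromaticNumber_blockHyperhole {c n : ℕ} (hn : n < (2 * c + 1) * n / 2 ⌈/⌉ c) :
    (blockHyperhole (2 * c + 1) n).chromaticNumber = ((2 * c + 1) * n / 2 ⌈/⌉ c : ℕ) := by
  have hc : 0 < c := Nat.pos_of_ne_zero (by rintro rfl; simp at hn)
  refine le_antisymm (colorable_blockHyperhole hn).chromaticNumber_le
    (le_chromaticNumber_iff_colorable.mpr fun m hm => ?_)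
  have hcard := card_le_mul_of_colorable_cycleBlowup (by omega) hm
  rw [Fintype.card_fin, show (2 * c + 1) / 2 = c by omega, mul_comm m c] at hcard
  exact_mod_cast (ceilDiv_le_iff_le_mul hc).mpr hcard

end blockHyperhole

/-- For odd `k ≥ 5` and every `n ≥ 2`, there is a `k`-hyperhole `H` with
`ω(H) = n` and `χ(H) = f_k(n)`. -/
theorem exists_hyperhole_chi_eq_ringF
    (k : ℕ) (hk : 5 ≤ k) (hko : Odd k) (n : ℕ) (hn : 2 ≤ n) :
    ∃ (m : ℕ) (H : SimpleGraph (Fin m)), IsHyperhole H k ∧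
      H.cliqueNum = n ∧ H.chromaticNumber = (ringF k n : ℕ∞) := by
  obtain ⟨c, rfl⟩ := hko
  have hc : 0 < c := by omega
  have hlt : n < (2 * c + 1) * n / 2 ⌈/⌉ c := by
    rw [lt_ceilDiv_iff hc, show (2 * c + 1) * n = 2 * (c * n) + n by ring]
    omega
  refine ⟨_, blockHyperhole (2 * c + 1) n, isHyperhole_blockHyperhole (by omega) hn,
    cliqueNum_blockHyperhole (by omega) hn, ?_⟩
  rw [ringF_eq_ceilDiv hc, chromaticNumber_blockHyperhole hlt]
end

section
/- Let k ≥ 5 be an odd integer. Then every graph G that is isomorphic to an induced subgraph of some k-hyperhole satisfies χ(G) ≤ f_k(ω(G)). -/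
open SimpleGraph

section AuxHyperhole
open Finset

lemma aux_zsum {k : ℕ} [NeZero k] (f : ZMod k → ℕ) :
    ∑ j ∈ Finset.range k, f (j : ZMod k) = ∑ i : ZMod k, f i := by
  rw [← Fin.sum_univ_eq_sum_range (fun j => f (j : ZMod k)) k]
  apply Fintype.sum_bijective (fun j : Fin k => ((j : ℕ) : ZMod k))
  · rw [Fintype.bijective_iff_injective_and_card]
    refine ⟨fun a b hab => ?_, by simp [ZMod.card]⟩
    have := congrArg ZMod.val hab
    rwa [ZMod.val_cast_of_lt a.2, ZMod.val_cast_of_lt b.2, Fin.val_inj] at this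
  · intro j; rfl

lemma aux_castne {c a b : ℕ} (h1 : a < b) (h2 : b < a + c) :
    (a : ZMod c) ≠ (b : ZMod c) := by
  intro h
  have := (ZMod.natCast_eq_natCast_iff a b c).mp h
  obtain ⟨t, ht⟩ := (Nat.modEq_iff_dvd' (le_of_lt h1)).mp this
  rcases t with _ | t
  · omega
  · have : c ≤ c * (t + 1) := Nat.le_mul_of_pos_right _ (by omega)
    omega

lemma aux_ringF_ge (k n : ℕ) (hk : 2 ≤ k) : n ≤ ringF k n := by
  have h1 : 0 < k - 1 := by omega
  have h2 : n ≤ k * n / (k-1) := by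
    calc n = (k-1) * n / (k-1) := by rw [Nat.mul_div_cancel_left _ h1]
    _ ≤ k * n / (k-1) := Nat.div_le_div_right (Nat.mul_le_mul_right n (by omega))
  unfold ringF
  split
  · exact h2
  · exact h2.trans (Nat.div_le_div_right (by omega))

lemma aux_ringF_main (k w N : ℕ) (hk : 5 ≤ k) (hko : Odd k) (hN : 2 * N ≤ k * w) :
    2 * N ≤ (k - 1) * ringF k w := by
  set K := k - 1 with hK
  have hK0 : 0 < K := by omega
  unfold ringF
  rw [← hK]
  split
  · rename_i hr
    have hkK : k % K = 1 := by
      have h1 : k = 1 + K := by omega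
      rw [h1, Nat.add_mod_right, Nat.mod_eq_of_lt (by omega)]
    have hmod : (k * w) % K = w % K := by
      conv_lhs => rw [Nat.mul_mod, hkK, one_mul, Nat.mod_mod_of_dvd w dvd_rfl]
    have hdm := Nat.div_add_mod (k * w) K
    interval_cases h : w % K
    · omega
    · have hKeven : Even K := by rcases hko with ⟨m, hm⟩; exact ⟨m, by omega⟩
      have hev : Even (K * (w / K)) := hKeven.mul_right _
      have hwodd : Odd w := by
        have hd := Nat.div_add_mod w K
        rcases hev with ⟨a, ha⟩
        exact ⟨a, by omega⟩
      rcases hko.mul hwodd with ⟨m, hm⟩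
      omega
  · have hdm := Nat.div_add_mod (k * w + (k-2)) K
    have : (k * w + (k-2)) % K < K := Nat.mod_lt _ hK0
    omega

end AuxHyperhole

/-- For odd `k ≥ 5`, every graph isomorphic to an induced subgraph of some
`k`-hyperhole satisfies `χ(G) ≤ f_k(ω(G))`. -/
theorem induced_subgraph_hyperhole_chromaticNumber_le {V : Type} [Fintype V]
    (k : ℕ) (hk : 5 ≤ k) (hko : Odd k) (G : SimpleGraph V)
    (h : ∃ (W : Type) (_ : Fintype W) (H : SimpleGraph W) (S : Set W),
      IsHyperhole H k ∧ Nonempty (G ≃g H.induce S)) :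
    G.chromaticNumber ≤ (ringF k G.cliqueNum : ℕ∞) := by
  classical
  obtain ⟨W, _W, H, S, ⟨X, hXne, hpart, hclq, hcomp, hanti⟩, ⟨φ⟩⟩ := h
  haveI : NeZero k := ⟨by omega⟩
  haveI : Fact (1 < k) := ⟨by omega⟩
  by_cases hV : IsEmpty V
  · have hcol0 : G.Colorable 0 :=
      ⟨SimpleGraph.Coloring.mk (fun v => isEmptyElim v) (fun {a b} _ => isEmptyElim a)⟩
    calc G.chromaticNumber ≤ ((0:ℕ) : ℕ∞) := hcol0.chromaticNumber_le
    _ ≤ _ := by exact_mod_cast Nat.zero_le _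
  haveI hVne : Nonempty V := not_isEmpty_iff.mp hV
  choose p hp hu using hpart
  set ω := G.cliqueNum with hω
  set c := ringF k ω with hc
  set P : ZMod k → Finset W := fun i => Set.toFinset (X i ∩ S) with hP
  have hPmem : ∀ (i : ZMod k) (w : W), w ∈ P i ↔ w ∈ X i ∧ w ∈ S := by
    intro i w; simp [hP, Set.mem_toFinset]
  set n : ZMod k → ℕ := fun i => (P i).card with hn
  have hne1 : ∀ i : ZMod k, i ≠ i + 1 := by
    intro i hh
    have h1 : (1 : ZMod k) = 0 := left_eq_add.mp hh
    have h2 := congrArg ZMod.val h1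
    rw [ZMod.val_one, ZMod.val_zero] at h2
    omega
  -- clique bound
  have hcb : ∀ i : ZMod k, n i + n (i+1) ≤ ω := by
    intro i
    have hdisj : Disjoint (P i) (P (i+1)) := by
      rw [Finset.disjoint_left]
      intro w hw hw'
      have h1 := hu w i ((hPmem i w).mp hw).1
      have h2 := hu w (i+1) ((hPmem _ w).mp hw').1
      exact hne1 i (h1.trans h2.symm)
    have hUS : ∀ w ∈ P i ∪ P (i+1), w ∈ S := by
      intro w hw
      rcases Finset.mem_union.mp hw with hh | hh
      exacts [((hPmem _ _).mp hh).2, ((hPmem _ _).mp hh).2]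
    have hUX : ∀ w ∈ P i ∪ P (i+1), w ∈ X i ∨ w ∈ X (i+1) := by
      intro w hw
      rcases Finset.mem_union.mp hw with hh | hh
      exacts [Or.inl ((hPmem _ _).mp hh).1, Or.inr ((hPmem _ _).mp hh).1]
    have hfinj : Function.Injective
        (fun x : {y // y ∈ P i ∪ P (i+1)} => φ.symm ⟨x.1, hUS x.1 x.2⟩) := by
      intro a b hab
      have h2 := φ.symm.toEquiv.injective hab
      have h3 : (a.1 : W) = b.1 := Subtype.mk_eq_mk.mp h2
      exact Subtype.ext h3
    set tV : Finset V :=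
      (P i ∪ P (i+1)).attach.map ⟨_, hfinj⟩ with htV
    have hcard : tV.card = n i + n (i+1) := by
      rw [htV, Finset.card_map, Finset.card_attach]
      exact Finset.card_union_of_disjoint hdisj
    have hclique : G.IsClique ↑tV := by
      intro v hv v' hv' hvv
      simp only [htV, Finset.coe_map, Set.mem_image, Finset.mem_coe,
        Finset.mem_attach, Function.Embedding.coeFn_mk, true_and] at hv hv'
      obtain ⟨a, ha⟩ := hv
      obtain ⟨b, hb⟩ := hv'
      have hab : (a.1 : W) ≠ b.1 := by
        intro hh
        apply hvv
        rw [← ha, ← hb]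
        congr 1
        exact Subtype.ext hh
      have hHadj : H.Adj a.1 b.1 := by
        rcases hUX a.1 a.2 with hA | hA <;> rcases hUX b.1 b.2 with hB | hB
        · exact hclq i hA hB hab
        · exact hcomp i a.1 hA b.1 (Set.mem_union_right _ hB)
        · exact (hcomp i b.1 hB a.1 (Set.mem_union_right _ hA)).symm
        · exact hclq (i+1) hA hB hab
      rw [← ha, ← hb]
      apply φ.symm.map_rel_iff.mpr
      exact hHadj
    have hle := SimpleGraph.IsClique.card_le_cliqueNum (t := tV) (tc := hclique)
    rw [hcard] at hle
    exact hle
  obtain ⟨v0⟩ := hVne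
  have hωpos : 1 ≤ ω := by
    have hclique : G.IsClique (↑({v0} : Finset V)) := by
      simp
    have := SimpleGraph.IsClique.card_le_cliqueNum (t := {v0}) (tc := hclique)
    simpa using this
  have hωc : ω ≤ c := aux_ringF_ge k ω (by omega)
  have hc0 : 0 < c := lt_of_lt_of_le hωpos hωc
  have hnc : ∀ i, n i ≤ c :=
    fun i => le_trans (le_trans (Nat.le_add_right _ _) (hcb i)) hωc
  set N : ℕ := ∑ i : ZMod k, n i with hN
  have h2N : 2 * N ≤ k * ω := by
    have h1 : ∑ i : ZMod k, (n i + n (i+1)) ≤ ∑ _i : ZMod k, ω :=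
      Finset.sum_le_sum (fun i _ => hcb i)
    have h2 : ∑ i : ZMod k, (n i + n (i+1)) = N + ∑ i : ZMod k, n (i+1) :=
      Finset.sum_add_distrib
    have h3 : ∑ i : ZMod k, n (i+1) = N :=
      Fintype.sum_equiv (Equiv.addRight 1) _ _ (fun i => rfl)
    have h4 : ∑ _i : ZMod k, ω = k * ω := by
      rw [Finset.sum_const, Finset.card_univ, ZMod.card, smul_eq_mul]
    omega
  have hkey : 2 * N ≤ (k-1) * c := aux_ringF_main k ω N hk hko h2N
  set t := (k-1)/2 with ht
  have hk2t : k - 1 = 2 * t := by rcases hko with ⟨m, hm⟩; omega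
  have hNt : N ≤ t * c := by
    have h1 : (k-1) * c = 2 * (t * c) := by rw [hk2t]; ring
    omega
  set M := c * ((N + c - 1)/c) with hM
  have hdm := Nat.div_add_mod (N + c - 1) c
  have hrlt : (N + c - 1) % c < c := Nat.mod_lt _ hc0
  have hMN : N ≤ M := by rw [hM]; omega
  have hqt : (N + c - 1)/c ≤ t := by
    by_contra hq
    have h1 : t + 1 ≤ (N + c - 1)/c := by omega
    have h2 : c * (t+1) ≤ c * ((N + c - 1)/c) := Nat.mul_le_mul_left c h1
    have h3 : c * (t+1) = t * c + c := by ring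
    omega
  have hMt : M ≤ t * c := by
    have h1 : c * ((N + c - 1)/c) ≤ c * t := Nat.mul_le_mul_left c hqt
    have h2 : c * t = t * c := Nat.mul_comm c t
    omega
  set A : ℕ → ℕ := fun i => ∑ j ∈ Finset.range i, n (j : ZMod k) with hA
  set B : ℕ → ℕ := fun i => ∑ j ∈ Finset.range i, (c - n ((j : ZMod k)+1)) with hB
  have hAk : A k = N := by rw [hA]; exact aux_zsum n
  have hBk : B k + N = k * c := by
    have h1 : B k + (∑ j ∈ Finset.range k, n ((j : ZMod k)+1)) =
        ∑ _j ∈ Finset.range k, c := by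
      rw [hB, ← Finset.sum_add_distrib]
      apply Finset.sum_congr rfl
      intro j _
      exact Nat.sub_add_cancel (hnc _)
    have h2 : ∑ j ∈ Finset.range k, n ((j : ZMod k)+1) = N := by
      rw [aux_zsum (fun i => n (i+1)), hN]
      exact Fintype.sum_equiv (Equiv.addRight 1) _ _ (fun i => rfl)
    rw [h2] at h1
    rw [h1, Finset.sum_const, Finset.card_range, smul_eq_mul]
  set sf : ℕ → ℕ := fun i => min (A i + (M - N)) (B i) with hsf
  have hs0 : sf 0 = 0 := by
    have h1 : A 0 = 0 := Finset.sum_range_zero _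
    have h2 : B 0 = 0 := Finset.sum_range_zero _
    show min (A 0 + (M - N)) (B 0) = 0
    omega
  have hsk : sf k = M := by
    have h1 : M + N ≤ k * c := by
      have h2 : k * c = 2 * (t * c) + c := by
        rw [show k = 2 * t + 1 by omega]; ring
      omega
    show min (A k + (M - N)) (B k) = M
    rw [hAk]
    omega
  have hstep1 : ∀ i, i < k → sf i + n (i : ZMod k) ≤ sf (i+1) := by
    intro i hik
    have h1 : A (i+1) = A i + n (i : ZMod k) := Finset.sum_range_succ _ i
    have h2 : B (i+1) = B i + (c - n ((i : ZMod k)+1)) := Finset.sum_range_succ _ i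
    have h3 : n (i : ZMod k) + n ((i : ZMod k)+1) ≤ c := le_trans (hcb _) hωc
    show min (A i + (M - N)) (B i) + n (i : ZMod k) ≤
      min (A (i+1) + (M - N)) (B (i+1))
    omega
  have hstep2 : ∀ i, i < k → sf (i+1) + n ((i : ZMod k)+1) ≤ sf i + c := by
    intro i hik
    have h1 : A (i+1) = A i + n (i : ZMod k) := Finset.sum_range_succ _ i
    have h2 : B (i+1) = B i + (c - n ((i : ZMod k)+1)) := Finset.sum_range_succ _ i
    have h3 : n (i : ZMod k) + n ((i : ZMod k)+1) ≤ c := le_trans (hcb _) hωc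
    have h4 : n ((i : ZMod k)+1) ≤ c := hnc _
    show min (A (i+1) + (M - N)) (B (i+1)) + n ((i : ZMod k)+1) ≤
      min (A i + (M - N)) (B i) + c
    omega
  -- rank function
  set κ : W → ℕ := fun w => (Fintype.equivFin W w : ℕ) with hκdef
  have hκ : Function.Injective κ := by
    intro a b hab
    exact (Fintype.equivFin W).injective (Fin.ext hab)
  set ρ : W → ℕ := fun w => ((P (p w)).filter (fun x => κ x < κ w)).card with hρ
  have hρlt : ∀ w, w ∈ S → ρ w < n (p w) := by
    intro w hwS
    have hwP : w ∈ P (p w) := (hPmem _ _).mpr ⟨hp w, hwS⟩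
    have hsub : (P (p w)).filter (fun x => κ x < κ w) ⊆ (P (p w)).erase w := by
      intro x hx
      rw [Finset.mem_erase]
      refine ⟨fun hxw => ?_, (Finset.mem_filter.mp hx).1⟩
      have := (Finset.mem_filter.mp hx).2
      rw [hxw] at this
      omega
    have h1 := Finset.card_le_card hsub
    have h2 := Finset.card_erase_of_mem hwP
    have h3 : 0 < (P (p w)).card := Finset.card_pos.mpr ⟨w, hwP⟩
    show ((P (p w)).filter (fun x => κ x < κ w)).card < (P (p w)).card
    omega
  have hρinj : ∀ w w', w ∈ S → w' ∈ S → p w = p w' → w ≠ w' → ρ w ≠ ρ w' := by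
    have hmono : ∀ a b, a ∈ S → b ∈ S → p a = p b → κ a < κ b → ρ a < ρ b := by
      intro a b haS hbS hab hkab
      have haP : a ∈ P (p b) := by rw [← hab]; exact (hPmem _ _).mpr ⟨hp a, haS⟩
      have hsub : (P (p a)).filter (fun x => κ x < κ a) ⊂
          (P (p b)).filter (fun x => κ x < κ b) := by
        rw [Finset.ssubset_iff_of_subset]
        · exact ⟨a, Finset.mem_filter.mpr ⟨haP, hkab⟩,
            fun hmem => by
              have := (Finset.mem_filter.mp hmem).2
              omega⟩
        · intro x hx
          rw [Finset.mem_filter] at hx ⊢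
          rw [← hab]
          exact ⟨hx.1, by omega⟩
      exact Finset.card_lt_card hsub
    intro w w' hwS hw'S hpp hne
    have hκne : κ w ≠ κ w' := fun hh => hne (hκ hh)
    rcases Nat.lt_or_ge (κ w) (κ w') with hlt | hge
    · exact Nat.ne_of_lt (hmono w w' hwS hw'S hpp hlt)
    · have hlt : κ w' < κ w := by omega
      exact (Nat.ne_of_lt (hmono w' w hw'S hwS hpp.symm hlt)).symm
  -- the coloring
  have hval : ∀ i : ZMod k, ((i.val : ℕ) : ZMod k) = i :=
    fun i => ZMod.natCast_rightInverse i
  set col : V → ZMod c :=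
    fun v => ((sf (p (φ v : W)).val + ρ (φ v : W) : ℕ) : ZMod c) with hcol
  have hconsec : ∀ (i : ZMod k) (x y : ℕ),
      (∃ r, r < n i ∧ x = sf i.val + r) →
      (∃ r', r' < n (i+1) ∧ y = sf (i+1).val + r') →
      (x : ZMod c) ≠ (y : ZMod c) := by
    intro i x y ⟨r, hr, hx⟩ ⟨r', hr', hy⟩
    have hik : i.val < k := ZMod.val_lt i
    by_cases hlast : i.val + 1 < k
    · have hv1 : (i+1).val = i.val + 1 := by
        rw [ZMod.val_add, ZMod.val_one, Nat.mod_eq_of_lt hlast]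
      have h1 := hstep1 i.val hik
      have h2 := hstep2 i.val hik
      rw [hval i] at h1 h2
      rw [hv1] at hy
      apply aux_castne <;> omega
    · have hvk : i.val = k - 1 := by omega
      have hv1 : (i+1).val = 0 := by
        rw [ZMod.val_add, ZMod.val_one, hvk,
          show k - 1 + 1 = k by omega, Nat.mod_self]
      have h1 := hstep1 i.val hik
      have h2 := hstep2 i.val hik
      rw [hval i] at h1 h2
      rw [show i.val + 1 = k by omega] at h1 h2
      have hxy : (x : ZMod c) ≠ ((sf k + r' : ℕ) : ZMod c) := by
        apply aux_castne <;> omega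
      have hyc : ((sf k + r' : ℕ) : ZMod c) = (y : ZMod c) := by
        have hMc : ((sf k : ℕ) : ZMod c) = 0 := by
          rw [hsk, hM]
          exact (ZMod.natCast_eq_zero_iff _ _).mpr ⟨_, rfl⟩
        rw [hy, hv1, hs0]
        push_cast
        simp [hMc]
      rw [← hyc]
      exact hxy
  have hproper : ∀ v v', G.Adj v v' → col v ≠ col v' := by
    intro v v' hadj hcoleq
    have hIadj : (H.induce S).Adj (φ v) (φ v') := φ.map_rel_iff.mpr hadj
    have hHadj : H.Adj ↑(φ v) ↑(φ v') := hIadj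
    have hWne : (↑(φ v) : W) ≠ ↑(φ v') := by
      intro hh
      exact hadj.ne (φ.toEquiv.injective (Subtype.ext hh))
    set w : W := ↑(φ v) with hw
    set w' : W := ↑(φ v') with hw'
    have hwS : w ∈ S := (φ v).2
    have hw'S : w' ∈ S := (φ v').2
    have hmem : w' ∈ X (p w - 1) ∪ X (p w) ∪ X (p w + 1) := by
      by_contra hcon
      exact hanti (p w) w (hp w) w' hcon hHadj
    have hcoleq' : ((sf (p w).val + ρ w : ℕ) : ZMod c) =
        ((sf (p w').val + ρ w' : ℕ) : ZMod c) := hcoleq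
    rcases hmem with (hm1 | hm2) | hm3
    · -- p w' = p w - 1, so p w = p w' + 1
      have hj : p w - 1 = p w' := hu w' _ hm1
      have hj' : p w = p w' + 1 := by rw [← hj]; ring
      refine hconsec (p w') _ _ ⟨ρ w', hρlt w' hw'S, rfl⟩
        ⟨ρ w, by rw [← hj']; exact hρlt w hwS, by rw [← hj']⟩ hcoleq'.symm
    · -- same part
      have hj : p w = p w' := hu w' _ hm2
      rw [← hj] at hcoleq'
      have hρne : ρ w ≠ ρ w' := hρinj w w' hwS hw'S hj hWne
      have hρw : ρ w < n (p w) := hρlt w hwS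
      have hρw' : ρ w' < n (p w) := by rw [hj]; exact hρlt w' hw'S
      have hnω : n (p w) ≤ c := hnc _
      rcases Nat.lt_or_ge (ρ w) (ρ w') with hlt | hge
      · exact aux_castne (by omega) (by omega) hcoleq'
      · exact aux_castne (by omega) (by omega) hcoleq'.symm
    · -- p w' = p w + 1
      have hj : p w + 1 = p w' := hu w' _ hm3
      refine hconsec (p w) _ _ ⟨ρ w, hρlt w hwS, rfl⟩
        ⟨ρ w', by rw [hj]; exact hρlt w' hw'S, by rw [hj]⟩ hcoleq'
  haveI : NeZero c := ⟨by omega⟩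
  have hcolorable : G.Colorable c := by
    have C : G.Coloring (ZMod c) :=
      SimpleGraph.Coloring.mk col (fun {a b} hab => hproper a b hab)
    have := C.colorable
    rwa [ZMod.card] at this
  exact hcolorable.chromaticNumber_le
end

section
/- Let k ≥ 5 be an odd integer. Then every k-ring R satisfies χ(R) ≤ f_k(ω(R)). -/
open SimpleGraph

/-! ### Auxiliary combinatorial constructions -/

lemma addmod_ne {k c x y : ℕ} (hx : x < k) (hy : y < k) (hxy : x ≠ y) :
    (c + x) % k ≠ (c + y) % k := by
  intro h
  have h2 : x % k = y % k :=
    Nat.ModEq.add_left_cancel' c (h : (c + x) ≡ (c + y) [MOD k])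
  rw [Nat.mod_eq_of_lt hx, Nat.mod_eq_of_lt hy] at h2
  exact hxy h2

/-- A base coloring scheme: stacks `0..k-1` (cyclically), palette `w+1`;
slot `0` is a spare, slots `1..w-1` are levels; `c i` is injective on slots,
and levels `j`, `q` of consecutive stacks with `j + q ≤ w` get distinct colors. -/
def BaseScheme (k w : ℕ) (c : ℕ → ℕ → ℕ) : Prop :=
  (∀ i s, i < k → s < w → c i s < w + 1) ∧
  (∀ i s s', i < k → s < w → s' < w → s ≠ s' → c i s ≠ c i s') ∧
  (∀ i j q, i < k → 1 ≤ j → j < w → 1 ≤ q → q < w → j + q ≤ w →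
    c i j ≠ c ((i + 1) % k) q)

lemma base_two (k : ℕ) (hk : 5 ≤ k) (hodd : k % 2 = 1) :
    ∃ c, BaseScheme k 2 c := by
  refine ⟨fun i s => if s = 0 then ((if i < k - 1 then i % 2 else 2) + 1) % 3
    else (if i < k - 1 then i % 2 else 2), ?_, ?_, ?_⟩
  · intro i s _ _
    simp only []
    split_ifs <;> omega
  · intro i s s' _ hs hs' hne
    have h2 : (if i < k - 1 then i % 2 else 2) < 3 := by split_ifs <;> omega
    interval_cases s <;> interval_cases s' <;> simp_all <;> omega
  · intro i j q hi hj hjw hq hqw hjq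
    interval_cases j
    interval_cases q
    simp only [if_neg (by omega : ¬ (1:ℕ) = 0)]
    rcases Nat.lt_or_ge i (k-1) with h | h
    · rw [Nat.mod_eq_of_lt (by omega : i + 1 < k)]
      split_ifs <;> omega
    · have hik : i = k - 1 := by omega
      have : (i + 1) % k = 0 := by rw [hik]; rw [(by omega : k - 1 + 1 = k)]; exact Nat.mod_self k
      rw [this]
      split_ifs <;> omega

/-- step function for the linear base scheme (`k = w+1`, `w` even) -/
def gfun (w j : ℕ) : ℕ :=
  if j = 1 then 0 else if 2 * j ≤ w then 2 * (j - 1) else 2 * (w - j) + 1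

lemma gfun_le {w j : ℕ} (hw : 4 ≤ w) (he : w % 2 = 0) (h1 : 1 ≤ j) (h2 : j < w) :
    gfun w j ≤ w - 1 := by
  unfold gfun; split_ifs <;> omega

lemma gfun_ne_one {w j : ℕ} (h1 : 1 ≤ j) (h2 : j < w) : gfun w j ≠ 1 := by
  unfold gfun; split_ifs <;> omega

lemma gfun_inj {w j j' : ℕ} (h1 : 1 ≤ j) (h2 : j < w) (h1' : 1 ≤ j') (h2' : j' < w)
    (hne : j ≠ j') : gfun w j ≠ gfun w j' := by
  unfold gfun; split_ifs <;> omega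

lemma gfun_necklace {w j q : ℕ} (h1 : 1 ≤ j) (h2 : j < w) (h1' : 1 ≤ q) (h2' : q < w)
    (hjq : j + q ≤ w) : gfun w j ≠ gfun w q + 1 := by
  unfold gfun; split_ifs <;> omega

lemma base_linear (w : ℕ) (hw : 4 ≤ w) (he : w % 2 = 0) :
    ∃ c, BaseScheme (w + 1) w c := by
  refine ⟨fun i s => if s = 0 then (i + 1) % (w + 1) else (i + gfun w s) % (w + 1),
    ?_, ?_, ?_⟩
  · intro i s _ _
    simp only []
    split_ifs <;> exact Nat.mod_lt _ (by omega)
  · intro i s s' _ hs hs' hne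
    rcases Nat.eq_zero_or_pos s with rfl | hs0
    · rcases Nat.eq_zero_or_pos s' with rfl | hs0'
      · omega
      · simp only [if_pos rfl, if_neg (by omega : ¬ s' = 0)]
        exact addmod_ne (by omega) (by have := gfun_le hw he hs0' hs'; omega)
          (fun h => gfun_ne_one hs0' hs' h.symm)
    · rcases Nat.eq_zero_or_pos s' with rfl | hs0'
      · simp only [if_pos rfl, if_neg (by omega : ¬ s = 0)]
        exact addmod_ne (by have := gfun_le hw he hs0 hs; omega) (by omega)
          (gfun_ne_one hs0 hs)
      · simp only [if_neg (by omega : ¬ s = 0), if_neg (by omega : ¬ s' = 0)]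
        exact addmod_ne (by have := gfun_le hw he hs0 hs; omega)
          (by have := gfun_le hw he hs0' hs'; omega) (gfun_inj hs0 hs hs0' hs' hne)
  · intro i j q hi hj hjw hq hqw hjq
    simp only [if_neg (by omega : ¬ j = 0), if_neg (by omega : ¬ q = 0)]
    rw [Nat.mod_add_mod]
    have : i + 1 + gfun w q = i + (1 + gfun w q) := by ring
    rw [this]
    exact addmod_ne (by have := gfun_le hw he hj hjw; omega)
      (by have := gfun_le hw he hq hqw; omega)
      (by have := gfun_necklace hj hjw hq hqw hjq; omega)

lemma base_insert (k w : ℕ) (hk : 3 ≤ k) (hw : 2 ≤ w) (c : ℕ → ℕ → ℕ)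
    (h : BaseScheme k w c) : ∃ c', BaseScheme (k + 2) w c' := by
  obtain ⟨hb, hi, hx⟩ := h
  refine ⟨fun i s => if i = k then
      (if s = 0 then c (k-1) 1 else if s = 1 then c (k-1) 0 else c (k-1) (w - s + 1))
    else if i = k + 1 then c (k-1) s else c i s, ?_, ?_, ?_⟩
  · intro i s hik hsw
    simp only []
    split_ifs <;> apply hb <;> omega
  · intro i s s' hik hs hs' hne
    simp only []
    by_cases hA : i = k
    · simp only [if_pos hA]
      split_ifs <;> apply hi (k-1) <;> omega
    · by_cases hB : i = k + 1
      · simp only [if_neg hA, if_pos hB]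
        exact hi (k-1) s s' (by omega) hs hs' hne
      · simp only [if_neg hA, if_neg hB]
        exact hi i s s' (by omega) hs hs' hne
  · intro i j q hik hj hjw hq hqw hjq
    simp only []
    rcases Nat.lt_or_ge i (k-1) with hlt | hge
    · have e1 : (i + 1) % (k + 2) = i + 1 := Nat.mod_eq_of_lt (by omega)
      rw [e1]
      simp only [if_neg (by omega : ¬ i = k), if_neg (by omega : ¬ i = k + 1),
        if_neg (by omega : ¬ i + 1 = k), if_neg (by omega : ¬ i + 1 = k + 1)]
      have := hx i j q (by omega) hj hjw hq hqw hjq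
      rwa [Nat.mod_eq_of_lt (by omega : i + 1 < k)] at this
    · rcases (by omega : i = k - 1 ∨ i = k ∨ i = k + 1) with h1 | h1 | h1
      · rw [h1]
        have e1 : (k - 1 + 1) % (k + 2) = k := by
          rw [(by omega : k - 1 + 1 = k)]; exact Nat.mod_eq_of_lt (by omega)
        rw [e1]
        simp only [if_neg (by omega : ¬ k - 1 = k), if_neg (by omega : ¬ k - 1 = k + 1),
          if_pos rfl]
        by_cases h2 : q = 1
        · simp only [if_neg (by omega : ¬ q = 0), if_pos h2]
          exact hi (k-1) j 0 (by omega) (by omega) (by omega) (by omega)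
        · simp only [if_neg (by omega : ¬ q = 0), if_neg h2]
          exact hi (k-1) j (w - q + 1) (by omega) (by omega) (by omega) (by omega)
      · rw [h1]
        have e1 : (k + 1) % (k + 2) = k + 1 := Nat.mod_eq_of_lt (by omega)
        rw [e1]
        simp only [if_pos rfl, if_neg (by omega : ¬ k + 1 = k)]
        by_cases h2 : j = 1
        · simp only [if_neg (by omega : ¬ j = 0), if_pos h2]
          exact hi (k-1) 0 q (by omega) (by omega) (by omega) (by omega)
        · simp only [if_neg (by omega : ¬ j = 0), if_neg h2]
          exact hi (k-1) (w - j + 1) q (by omega) (by omega) (by omega) (by omega)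
      · rw [h1]
        have e1 : (k + 1 + 1) % (k + 2) = 0 := by
          rw [(by omega : k + 1 + 1 = k + 2)]; exact Nat.mod_self _
        rw [e1]
        simp only [if_neg (by omega : ¬ k + 1 = k), if_pos rfl,
          if_neg (by omega : ¬ (0:ℕ) = k), if_neg (by omega : ¬ (0:ℕ) = k + 1)]
        have := hx (k-1) j q (by omega) hj hjw hq hqw hjq
        rwa [(by omega : k - 1 + 1 = k), Nat.mod_self] at this

lemma base_odd (k w : ℕ) (hk : 1 ≤ k) (hw : 3 ≤ w) (hodd : w % 2 = 1) (c : ℕ → ℕ → ℕ)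
    (h : BaseScheme k (w - 1) c) : ∃ c', BaseScheme k w c' := by
  obtain ⟨hb, hi, hx⟩ := h
  refine ⟨fun i s => if s = 0 then c i 0 else if s < (w+1)/2 then c i s
    else if s = (w+1)/2 then w else c i (s - 1), ?_, ?_, ?_⟩
  · intro i s hik hsw
    simp only []
    split_ifs <;> first
      | omega
      | (have := hb i 0 hik (by omega); omega)
      | (have := hb i s hik (by omega); omega)
      | (have := hb i (s-1) hik (by omega); omega)
  · intro i s s' hik hs hs' hne
    simp only []
    have B0 := hb i 0 hik (by omega)
    split_ifs <;> first
      | omega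
      | (apply hi i <;> omega)
      | (have := hb i s hik (by omega); omega)
      | (have := hb i s' hik (by omega); omega)
      | (have := hb i (s-1) hik (by omega); omega)
      | (have := hb i (s'-1) hik (by omega); omega)
  · intro i j q hik hj hjw hq hqw hjq
    simp only []
    have B1 : ∀ s, s < w - 1 → c i s < w := fun s hs => by
      have := hb i s hik hs; omega
    have B2 : ∀ s, s < w - 1 → c ((i+1)%k) s < w := fun s hs => by
      have := hb ((i+1)%k) s (Nat.mod_lt _ (by omega)) hs; omega
    have hcross : ∀ a b, 1 ≤ a → a < w - 1 → 1 ≤ b → b < w - 1 → a + b ≤ w - 1 →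
        c i a ≠ c ((i+1)%k) b := fun a b h1 h2 h3 h4 h5 =>
      hx i a b hik h1 h2 h3 h4 h5
    split_ifs with e1 e2 e3 e4 e5 e6 e7 e8 e9 e10 e11 e12 e13 e14 e15 e16 e17 e18 e19 e20
      <;> first
      | omega
      | (apply hcross <;> omega)
      | (have := B2 q (by omega); omega)
      | (have := B2 (q-1) (by omega); omega)
      | (have := B1 j (by omega); omega)
      | (have := B1 (j-1) (by omega); omega)

lemma base_even_all (w : ℕ) (hw : 4 ≤ w) (he : w % 2 = 0) :
    ∀ d, ∃ c, BaseScheme (w + 1 + 2 * d) w c := by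
  intro d
  induction d with
  | zero => simpa using base_linear w hw he
  | succ n ih =>
    obtain ⟨c, hc⟩ := ih
    obtain ⟨c', hc'⟩ := base_insert (w + 1 + 2 * n) w (by omega) (by omega) c hc
    have he2 : w + 1 + 2 * (n + 1) = w + 1 + 2 * n + 2 := by omega
    rw [he2]
    exact ⟨c', hc'⟩

lemma base_exists (k w : ℕ) (hk : 5 ≤ k) (hkodd : k % 2 = 1) (hw : 2 ≤ w) (hwk : w ≤ k) :
    ∃ c, BaseScheme k w c := by
  have heven : ∀ w', 2 ≤ w' → w' % 2 = 0 → w' ≤ k → ∃ c, BaseScheme k w' c := by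
    intro w' h2 he hle
    rcases (by omega : w' = 2 ∨ 4 ≤ w') with rfl | h4
    · exact base_two k hk hkodd
    · have hlt : w' + 1 ≤ k := by omega
      obtain ⟨c, hc⟩ := base_even_all w' h4 he ((k - w' - 1) / 2)
      have hdm := Nat.div_add_mod (k - w' - 1) 2
      have he2 : k = w' + 1 + 2 * ((k - w' - 1) / 2) := by omega
      rw [he2]
      exact ⟨c, hc⟩
  rcases Nat.even_or_odd w with hpar | hpar
  · exact heven w hw (Nat.even_iff.mp hpar) hwk
  · have hpar' : w % 2 = 1 := Nat.odd_iff.mp hpar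
    obtain ⟨c, hc⟩ := heven (w - 1) (by omega) (by omega) (by omega)
    exact base_odd k w (by omega) (by omega) hpar' c hc

lemma ringF_eq_s12 (k om A w : ℕ) (hk : 5 ≤ k) (hom : 2 ≤ om)
    (hAw : om = A * (k - 1) + w) (hw2 : 2 ≤ w) (hwk : w ≤ k) :
    ringF k om = A * k + w + 1 := by
  obtain ⟨b, rfl⟩ : ∃ b, k = b + 2 := ⟨k - 2, by omega⟩
  have hb : 3 ≤ b := by omega
  have hk1 : b + 2 - 1 = b + 1 := by omega
  have hk2 : b + 2 - 2 = b := by omega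
  have hAw' : om = A * (b + 1) + w := by rw [hk1] at hAw; exact hAw
  unfold ringF
  rw [hk1, hk2]
  rcases (by omega : w ≤ b ∨ w = b + 1 ∨ w = b + 2) with hc | hc | hc
  · have hmod : om % (b + 1) = w := by
      rw [hAw', Nat.add_comm, Nat.add_mul_mod_self_right, Nat.mod_eq_of_lt (by omega)]
    rw [if_neg (by omega)]
    have hkom : (b + 2) * om + b = (b + 1) * (A * (b + 2) + w) + (w + b) := by
      rw [hAw']; ring
    rw [hkom, Nat.mul_add_div (by omega)]
    have : (w + b) / (b + 1) = 1 :=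
      Nat.div_eq_of_lt_le (by omega) (by omega)
    omega
  · have hmod : om % (b + 1) = 0 := by
      rw [hAw', hc, (by ring : A * (b + 1) + (b + 1) = (A + 1) * (b + 1))]
      exact Nat.mul_mod_left _ _
    rw [if_pos (by omega)]
    have hkom : (b + 2) * om = (b + 1) * (A * (b + 2) + w + 1) := by
      rw [hAw', hc]; ring
    rw [hkom, Nat.mul_div_cancel_left _ (by omega : 0 < b + 1)]
  · have hmod : om % (b + 1) = 1 := by
      rw [hAw', hc, (by ring : A * (b + 1) + (b + 2) = 1 + (A + 1) * (b + 1)),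
        Nat.add_mul_mod_self_right]
      exact Nat.mod_eq_of_lt (by omega)
    rw [if_pos (by omega)]
    have hkom : (b + 2) * om = (b + 1) * (A * (b + 2) + w + 1) + 1 := by
      rw [hAw', hc]; ring
    rw [hkom, Nat.mul_add_div (by omega), Nat.div_eq_of_lt (by omega)]

lemma block_ne {k p p' x x' : ℕ} (hx : x < k) (hx' : x' < k) (h : p ≠ p') :
    p * k + x ≠ p' * k + x' := by
  intro he
  apply h
  have h1 : (p * k + x) / k = p := by
    rw [Nat.mul_comm, Nat.mul_add_div (by omega), Nat.div_eq_of_lt hx]; omega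
  have h2 : (p' * k + x') / k = p' := by
    rw [Nat.mul_comm, Nat.mul_add_div (by omega), Nat.div_eq_of_lt hx']; omega
  rw [← h1, ← h2, he]
lemma cong_mod {k a b m r : ℕ} (h : a % k = b % k) : (a * m + r) % k = (b * m + r) % k :=
  Nat.ModEq.add_right r (Nat.ModEq.mul_right m h)


def MainScheme (k om t : ℕ) (c : ℕ → ℕ → ℕ) : Prop :=
  (∀ i j, i < k → 1 ≤ j → j ≤ om - 1 → c i j < t) ∧
  (∀ i j j', i < k → 1 ≤ j → j ≤ om - 1 → 1 ≤ j' → j' ≤ om - 1 → j ≠ j' →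
    c i j ≠ c i j') ∧
  (∀ i j q, i < k → 1 ≤ j → 1 ≤ q → j + q ≤ om → c i j ≠ c ((i + 1) % k) q)

lemma main_exists (k om : ℕ) (hk : 5 ≤ k) (hkodd : k % 2 = 1) (hom : 2 ≤ om) :
    ∃ c, MainScheme k om (ringF k om) c := by
  obtain ⟨m, hm⟩ : ∃ m, k = 2 * m + 1 := ⟨k / 2, by omega⟩
  have hm2 : 2 ≤ m := by omega
  have hk0 : 0 < k := by omega
  obtain ⟨A, w, hAw, hw2, hwk⟩ : ∃ A w, om = A * (k - 1) + w ∧ 2 ≤ w ∧ w ≤ k := by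
    have hd := Nat.div_add_mod (om - 2) (k - 1)
    have hr : (om - 2) % (k - 1) < k - 1 := Nat.mod_lt _ (by omega)
    refine ⟨(om - 2) / (k - 1), (om - 2) % (k - 1) + 2, ?_, by omega, by omega⟩
    rw [Nat.mul_comm]
    omega
  have hAm : A * (k - 1) = A * m + A * m := by
    have h1 : k - 1 = m + m := by omega
    rw [h1, Nat.mul_add]
  have hom2 : om = A * m + A * m + w := by rw [hAw, hAm]
  rw [ringF_eq_s12 k om A w hk hom hAw hw2 hwk]
  obtain ⟨cb, hb, hbi, hbx⟩ := base_exists k w hk hkodd hw2 hwk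
  -- helper facts
  have hm0 : 0 < m := by omega
  have hblock : ∀ p x, p < A → x < k → p * k + x < A * k := by
    intro p x hp hx
    have h1 : (p + 1) * k ≤ A * k := Nat.mul_le_mul_right k hp
    have h2 : (p + 1) * k = p * k + k := Nat.succ_mul p k
    omega
  have hdivA : ∀ x, x < A * m → x / m < A := fun x hx =>
    (Nat.div_lt_iff_lt_mul hm0).mpr hx
  have hmodm : ∀ a x, ((a % k) * m + x) % k = (a * m + x) % k := fun a x =>
    cong_mod (Nat.mod_mod_of_dvd a dvd_rfl)
  have hPlt : ∀ i j, 1 ≤ j → j ≤ A * m →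
      ((j-1)/m) * k + ((i * m + (j-1) % m) % k) < A * k := by
    intro i j h1 h2
    exact hblock _ _ (hdivA _ (by omega)) (Nat.mod_lt _ hk0)
  have hElt : ∀ i e, 1 ≤ e → e < A * m →
      (e/m) * k + (((i+1) * m + (e % m) + 1) % k) < A * k := by
    intro i e h1 h2
    exact hblock _ _ (hdivA _ (by omega)) (Nat.mod_lt _ hk0)
  have hreg : ∀ j, 1 ≤ j → j ≤ om - 1 →
      (1 ≤ j ∧ j ≤ A * m) ∨ (A * m < j ∧ j ≤ A * m + (w-1)) ∨
      (j = A * m + w ∧ om - j = A * m ∧ ¬ j ≤ A * m + (w-1)) ∨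
      (A * m + (w-1) < j ∧ om - j ≠ A * m ∧ om - j < A * m ∧ 1 ≤ om - j) := by
    intro j h1 h2
    omega
  refine ⟨fun i j =>
    if j ≤ A * m then ((j-1)/m) * k + ((i * m + (j-1) % m) % k)
    else if j ≤ A * m + (w-1) then A * k + cb i (j - A * m)
    else if om - j = A * m then A * k + cb i 0
    else ((om-j)/m) * k + (((i+1) * m + ((om-j) % m) + 1) % k), ?_, ?_, ?_⟩
  · -- bound
    intro i j hi h1 h2
    simp only []
    split_ifs with c1 c2 c3
    · have := hPlt i j h1 c1
      omega
    · have hs : cb i (j - A * m) < w + 1 := hb i _ hi (by omega)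
      omega
    · have hs : cb i 0 < w + 1 := hb i 0 hi (by omega)
      omega
    · have := hElt i (om - j) (by omega) (by omega)
      omega
  · -- injectivity within a stack
    intro i j j' hi hj1 hj2 hj'1 hj'2 hne
    simp only []
    rcases hreg j hj1 hj2 with ⟨u1,u2⟩|⟨u1,u2⟩|⟨u1,u2,u3⟩|⟨u1,u2,u3,u4⟩ <;>
      rcases hreg j' hj'1 hj'2 with ⟨v1,v2⟩|⟨v1,v2⟩|⟨v1,v2,v3⟩|⟨v1,v2,v3,v4⟩
    -- PP
    · rw [if_pos u2, if_pos v2]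
      by_cases hpq : (j-1)/m = (j'-1)/m
      · rw [hpq]
        have d1 := Nat.div_add_mod (j-1) m
        have d2 := Nat.div_add_mod (j'-1) m
        rw [← hpq] at d2
        have hxy : (i * m + (j-1) % m) % k ≠ (i * m + (j'-1) % m) % k :=
          addmod_ne (by have := Nat.mod_lt (j-1) hm0; omega)
            (by have := Nat.mod_lt (j'-1) hm0; omega) (by omega)
        omega
      · exact block_ne (Nat.mod_lt _ hk0) (Nat.mod_lt _ hk0) hpq
    -- PB
    · rw [if_pos u2, if_neg (by omega), if_pos v2]
      have := hPlt i j u1 u2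
      omega
    -- PS
    · rw [if_pos u2, if_neg v3, if_neg (by omega), if_pos v2]
      have := hPlt i j u1 u2
      omega
    -- PE
    · rw [if_pos u2, if_neg (by omega), if_neg (by omega), if_neg v2]
      by_cases hpq : (j-1)/m = (om-j')/m
      · rw [hpq]
        have hxy : (i * m + (j-1) % m) % k ≠ ((i+1) * m + (om-j') % m + 1) % k := by
          have e1 : (i+1) * m + (om-j') % m + 1 = i * m + (m + (om-j') % m + 1) := by ring
          rw [e1]
          exact addmod_ne (by have := Nat.mod_lt (j-1) hm0; omega)
            (by have := Nat.mod_lt (om-j') hm0; omega)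
            (by have := Nat.mod_lt (j-1) hm0; omega)
        omega
      · exact block_ne (Nat.mod_lt _ hk0) (Nat.mod_lt _ hk0) hpq
    -- BP
    · rw [if_neg (by omega), if_pos u2, if_pos v2]
      have := hPlt i j' v1 v2
      omega
    -- BB
    · rw [if_neg (by omega), if_pos u2, if_neg (by omega), if_pos v2]
      have := hbi i (j - A*m) (j' - A*m) hi (by omega) (by omega) (by omega)
      omega
    -- BS
    · rw [if_neg (by omega), if_pos u2, if_neg v3, if_neg (by omega), if_pos v2]
      have := hbi i (j - A*m) 0 hi (by omega) (by omega) (by omega)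
      omega
    -- BE
    · rw [if_neg (by omega), if_pos u2, if_neg (by omega), if_neg (by omega), if_neg v2]
      have := hElt i (om - j') (by omega) (by omega)
      omega
    -- SP
    · rw [if_neg u3, if_neg (by omega), if_pos u2, if_pos v2]
      have := hPlt i j' v1 v2
      omega
    -- SB
    · rw [if_neg u3, if_neg (by omega), if_pos u2, if_neg (by omega), if_pos v2]
      have := hbi i 0 (j' - A*m) hi (by omega) (by omega) (by omega)
      omega
    -- SS
    · omega
    -- SE
    · rw [if_neg u3, if_neg (by omega), if_pos u2, if_neg (by omega), if_neg (by omega),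
        if_neg v2]
      have := hElt i (om - j') (by omega) (by omega)
      omega
    -- EP
    · rw [if_neg (by omega), if_neg (by omega), if_neg u2, if_pos v2]
      by_cases hpq : (om-j)/m = (j'-1)/m
      · rw [hpq]
        have hxy : ((i+1) * m + (om-j) % m + 1) % k ≠ (i * m + (j'-1) % m) % k := by
          have e1 : (i+1) * m + (om-j) % m + 1 = i * m + (m + (om-j) % m + 1) := by ring
          rw [e1]
          exact addmod_ne (by have := Nat.mod_lt (om-j) hm0; omega)
            (by have := Nat.mod_lt (j'-1) hm0; omega)
            (by have := Nat.mod_lt (j'-1) hm0; omega)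
        omega
      · exact block_ne (Nat.mod_lt _ hk0) (Nat.mod_lt _ hk0) hpq
    -- EB
    · rw [if_neg (by omega), if_neg (by omega), if_neg u2, if_neg (by omega), if_pos v2]
      have := hElt i (om - j) (by omega) (by omega)
      omega
    -- ES
    · rw [if_neg (by omega), if_neg (by omega), if_neg u2, if_neg v3, if_neg (by omega),
        if_pos v2]
      have := hElt i (om - j) (by omega) (by omega)
      omega
    -- EE
    · rw [if_neg (by omega), if_neg (by omega), if_neg u2, if_neg (by omega),
        if_neg (by omega), if_neg v2]
      by_cases hpq : (om-j)/m = (om-j')/m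
      · rw [hpq]
        have d1 := Nat.div_add_mod (om-j) m
        have d2 := Nat.div_add_mod (om-j') m
        rw [← hpq] at d2
        have hxy : ((i+1) * m + (om-j) % m + 1) % k ≠ ((i+1) * m + (om-j') % m + 1) % k := by
          have e1 : (i+1) * m + (om-j) % m + 1 = (i+1) * m + ((om-j) % m + 1) := by ring
          have e2 : (i+1) * m + (om-j') % m + 1 = (i+1) * m + ((om-j') % m + 1) := by ring
          rw [e1, e2]
          exact addmod_ne (by have := Nat.mod_lt (om-j) hm0; omega)
            (by have := Nat.mod_lt (om-j') hm0; omega) (by omega)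
        omega
      · exact block_ne (Nat.mod_lt _ hk0) (Nat.mod_lt _ hk0) hpq
  · -- cross
    intro i j q hi hj1 hq1 hjq
    simp only []
    have hj2 : j ≤ om - 1 := by omega
    have hq2 : q ≤ om - 1 := by omega
    have hi' : (i + 1) % k < k := Nat.mod_lt _ hk0
    rcases hreg j hj1 hj2 with ⟨u1,u2⟩|⟨u1,u2⟩|⟨u1,u2,u3⟩|⟨u1,u2,u3,u4⟩ <;>
      rcases hreg q hq1 hq2 with ⟨v1,v2⟩|⟨v1,v2⟩|⟨v1,v2,v3⟩|⟨v1,v2,v3,v4⟩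
    -- PP
    · rw [if_pos u2, if_pos v2]
      rw [hmodm (i+1) ((q-1) % m)]
      by_cases hpq : (j-1)/m = (q-1)/m
      · rw [hpq]
        have hxy : (i * m + (j-1) % m) % k ≠ ((i+1) * m + (q-1) % m) % k := by
          have e1 : (i+1) * m + (q-1) % m = i * m + (m + (q-1) % m) := by ring
          rw [e1]
          exact addmod_ne (by have := Nat.mod_lt (j-1) hm0; omega)
            (by have := Nat.mod_lt (q-1) hm0; omega)
            (by have := Nat.mod_lt (j-1) hm0; omega)
        omega
      · exact block_ne (Nat.mod_lt _ hk0) (Nat.mod_lt _ hk0) hpq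
    -- PB
    · rw [if_pos u2, if_neg (by omega), if_pos v2]
      have := hPlt i j u1 u2
      omega
    -- PS
    · rw [if_pos u2, if_neg v3, if_neg (by omega), if_pos v2]
      have := hPlt i j u1 u2
      omega
    -- PE
    · rw [if_pos u2, if_neg (by omega), if_neg (by omega), if_neg v2]
      -- j + q ≤ om so j ≤ om - q
      have hje : j ≤ om - q := by omega
      have hrw : ((((i+1) % k)+1) * m + (om-q) % m + 1) % k = (i * m + (om-q) % m) % k := by
        have h1 : (((i+1) % k + 1) * m + ((om-q) % m + 1)) % k
            = ((i+1+1) * m + ((om-q) % m + 1)) % k :=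
          cong_mod (Nat.mod_add_mod (i+1) k 1)
        have e0 : (((i+1) % k)+1) * m + (om-q) % m + 1
            = ((i+1) % k + 1) * m + ((om-q) % m + 1) := by ring
        have e1 : (i+1+1) * m + ((om-q) % m + 1) = (i * m + (om-q) % m) + k := by
          rw [hm]; ring
        rw [e0, h1, e1, Nat.add_mod_right]
      rw [hrw]
      by_cases hpq : (j-1)/m = (om-q)/m
      · rw [hpq]
        have d1 := Nat.div_add_mod (j-1) m
        have d2 := Nat.div_add_mod (om-q) m
        rw [← hpq] at d2
        have hxy : (i * m + (j-1) % m) % k ≠ (i * m + (om-q) % m) % k :=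
          addmod_ne (by have := Nat.mod_lt (j-1) hm0; omega)
            (by have := Nat.mod_lt (om-q) hm0; omega) (by omega)
        omega
      · exact block_ne (Nat.mod_lt _ hk0) (Nat.mod_lt _ hk0) hpq
    -- BP
    · rw [if_neg (by omega), if_pos u2, if_pos v2]
      have := hPlt ((i+1) % k) q v1 v2
      omega
    -- BB
    · rw [if_neg (by omega), if_pos u2, if_neg (by omega), if_pos v2]
      have := hbx i (j - A*m) (q - A*m) hi (by omega) (by omega) (by omega) (by omega)
        (by omega)
      omega
    -- BS : vacuous
    · omega
    -- BE : vacuous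
    · omega
    -- SP
    · rw [if_neg u3, if_neg (by omega), if_pos u2, if_pos v2]
      have := hPlt ((i+1) % k) q v1 v2
      omega
    -- SB : vacuous
    · omega
    -- SS : vacuous
    · omega
    -- SE : vacuous
    · omega
    -- EP
    · rw [if_neg (by omega), if_neg (by omega), if_neg u2, if_pos v2]
      rw [hmodm (i+1) ((q-1) % m)]
      have hqe : q ≤ om - j := by omega
      by_cases hpq : (om-j)/m = (q-1)/m
      · rw [hpq]
        have d1 := Nat.div_add_mod (om-j) m
        have d2 := Nat.div_add_mod (q-1) m
        rw [← hpq] at d2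
        have hxy : ((i+1) * m + (om-j) % m + 1) % k ≠ ((i+1) * m + (q-1) % m) % k := by
          have e1 : (i+1) * m + (om-j) % m + 1 = (i+1) * m + ((om-j) % m + 1) := by ring
          rw [e1]
          exact addmod_ne (by have := Nat.mod_lt (om-j) hm0; omega)
            (by have := Nat.mod_lt (q-1) hm0; omega) (by omega)
        omega
      · exact block_ne (Nat.mod_lt _ hk0) (Nat.mod_lt _ hk0) hpq
    -- EB : vacuous
    · omega
    -- ES : vacuous
    · omega
    -- EE : vacuous
    · omega

/-- For odd `k ≥ 5`, every `k`-ring `R` satisfies `χ(R) ≤ f_k(ω(R))`. -/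
theorem ring_chromaticNumber_le_ringF {V : Type} [Fintype V]
    (k : ℕ) (hk : 5 ≤ k) (hko : Odd k)
    (R : SimpleGraph V) (hR : IsRing R k) :
    R.chromaticNumber ≤ (ringF k R.cliqueNum : ℕ∞) := by
  classical
  haveI : NeZero k := ⟨by omega⟩
  haveI : Fact (1 < k) := ⟨by omega⟩
  obtain ⟨X, hXne, huniq, hstruct⟩ := hR
  choose mm hmm u hu_inj hu_range hu_nested hu_cover hu_first using hstruct
  -- membership helpers
  have hadj_of_closed : ∀ x y : V, y ∈ closedNbhd R x → y ≠ x → R.Adj x y := by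
    intro x y hy hne
    rcases hy with h | h
    · exact absurd h hne
    · exact h
  have hclosed_of_adj : ∀ x y : V, R.Adj x y → y ∈ closedNbhd R x := by
    intro x y h
    exact Set.mem_insert_of_mem _ h
  -- total index function
  set U : (ZMod k) → ℕ → V := fun i n => u i ⟨n % mm i, Nat.mod_lt _ (hmm i)⟩ with hU
  have hU_mem : ∀ i n, U i n ∈ X i := by
    intro i n
    rw [← hu_range i]
    exact ⟨_, rfl⟩
  have hU_inj : ∀ i n n', n < mm i → n' < mm i → U i n = U i n' → n = n' := by
    intro i n n' h1 h2 he
    have := hu_inj i he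
    have := congrArg Fin.val this
    simpa [Nat.mod_eq_of_lt h1, Nat.mod_eq_of_lt h2] using this
  -- parts are disjoint
  have hpart_ne : ∀ (i i' : ZMod k) v, i ≠ i' → v ∈ X i → v ∈ X i' → False := by
    intro i i' v hne h1 h2
    obtain ⟨j, _, hj⟩ := huniq v
    exact hne ((hj i h1).trans (hj i' h2).symm)
  have hUne : ∀ (i i' : ZMod k) n n', i ≠ i' → U i n ≠ U i' n' := by
    intro i i' n n' hne he
    exact hpart_ne i i' _ hne (hU_mem i n) (he ▸ hU_mem i' n')
  -- part and level of a vertex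
  have hex : ∀ v : V, ∃ p : (ZMod k) × ℕ, v = U p.1 p.2 ∧ p.2 < mm p.1 := by
    intro v
    obtain ⟨i, hi, _⟩ := huniq v
    rw [← hu_range i] at hi
    obtain ⟨j, hj⟩ := hi
    refine ⟨⟨i, j.val⟩, ?_, j.isLt⟩
    rw [← hj, hU]
    simp only []
    congr 1
    exact (Fin.ext (by simp [Nat.mod_eq_of_lt j.isLt])).symm
  choose pt hpt using hex
  set part : V → ZMod k := fun v => (pt v).1 with hpartdef
  set lv0 : V → ℕ := fun v => (pt v).2 with hlv0def
  have hvU : ∀ v, v = U (part v) (lv0 v) := fun v => (hpt v).1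
  have hlv0_lt : ∀ v, lv0 v < mm (part v) := fun v => (hpt v).2
  have hpart_eq : ∀ v i, v ∈ X i → part v = i := by
    intro v i hv
    by_contra hne
    have h0 := hU_mem (part v) (lv0 v)
    rw [← hvU v] at h0
    exact hpart_ne (part v) i v hne h0 hv
  -- adjacency within a part
  have hXadj : ∀ (i : ZMod k) n n', n < mm i → n' < mm i → n ≠ n' → R.Adj (U i n) (U i n') := by
    intro i n n' h1 h2 hne
    have hmem : U i n' ∈ X i := hU_mem i n'
    have hcov := hu_cover i hmem
    have hle : (⟨n % mm i, Nat.mod_lt _ (hmm i)⟩ : Fin (mm i)) ≤ ⟨mm i - 1, by omega⟩ := by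
      simp only [Fin.mk_le_mk]
      have := Nat.mod_lt n (hmm i)
      omega
    have hsub := hu_nested i _ _ hle
    exact hadj_of_closed _ _ (hsub hcov) (fun h => hne (hU_inj i n' n h2 h1 h).symm)
  -- nested adjacency propagation across consecutive parts
  have hcross_all : ∀ (i : ZMod k) a b a' b', a < mm i → b < mm (i+1) → a' ≤ a → b' ≤ b →
      R.Adj (U i a) (U (i+1) b) → R.Adj (U i a') (U (i+1) b') := by
    intro i a b a' b' ha hb ha' hb' hadj
    have hne1 : (i : ZMod k) ≠ i + 1 := by
      intro h
      have : (0 : ZMod k) = 1 := by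
        have := congrArg (fun z => z - i) h
        simpa [sub_eq_iff_eq_add] using this
      exact absurd this.symm one_ne_zero
    have hle1 : (⟨b' % mm (i+1), Nat.mod_lt _ (hmm _)⟩ : Fin (mm (i+1))) ≤
        ⟨b % mm (i+1), Nat.mod_lt _ (hmm _)⟩ := by
      simp only [Fin.mk_le_mk]
      rw [Nat.mod_eq_of_lt hb, Nat.mod_eq_of_lt (by omega)]
      exact hb'
    have h1 : U i a ∈ closedNbhd R (U (i+1) b) := hclosed_of_adj _ _ hadj.symm
    have h2 : U i a ∈ closedNbhd R (U (i+1) b') := hu_nested (i+1) _ _ hle1 h1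
    have h3 : R.Adj (U (i+1) b') (U i a) :=
      hadj_of_closed _ _ h2 (fun h => hUne i (i+1) a b' hne1 h)
    have hle2 : (⟨a' % mm i, Nat.mod_lt _ (hmm _)⟩ : Fin (mm i)) ≤
        ⟨a % mm i, Nat.mod_lt _ (hmm _)⟩ := by
      simp only [Fin.mk_le_mk]
      rw [Nat.mod_eq_of_lt ha, Nat.mod_eq_of_lt (by omega)]
      exact ha'
    have h4 : U (i+1) b' ∈ closedNbhd R (U i a) := hclosed_of_adj _ _ h3.symm
    have h5 : U (i+1) b' ∈ closedNbhd R (U i a') := hu_nested i _ _ hle2 h4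
    exact hadj_of_closed _ _ h5 (fun h => hUne (i+1) i b' a' hne1.symm h)
  have hself_ne : ∀ i : ZMod k, i ≠ i + 1 := by
    intro i h
    have : (0 : ZMod k) = 1 := by
      have := congrArg (fun z => z - i) h
      simpa [sub_eq_iff_eq_add] using this
    exact absurd this.symm one_ne_zero
  have hclique_le : ∀ (S : Finset V), R.IsClique (S : Set V) → S.card ≤ R.cliqueNum := by
    intro S hS
    exact SimpleGraph.IsClique.card_le_cliqueNum (tc := hS)
  have hcross_sum : ∀ (i : ZMod k) a b, a < mm i → b < mm (i+1) →
      R.Adj (U i a) (U (i+1) b) → a + b + 2 ≤ R.cliqueNum := by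
    intro i a b ha hb hadj
    have hne1 := hself_ne i
    have hc1 : ((Finset.range (a+1)).image (U i)).card = a + 1 := by
      rw [Finset.card_image_of_injOn, Finset.card_range]
      intro x hx y hy hxy
      simp only [Finset.coe_range, Set.mem_Iio] at hx hy
      exact hU_inj i x y (by omega) (by omega) hxy
    have hc2 : ((Finset.range (b+1)).image (U (i+1))).card = b + 1 := by
      rw [Finset.card_image_of_injOn, Finset.card_range]
      intro x hx y hy hxy
      simp only [Finset.coe_range, Set.mem_Iio] at hx hy
      exact hU_inj (i+1) x y (by omega) (by omega) hxy
    have hdisj : Disjoint ((Finset.range (a+1)).image (U i))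
        ((Finset.range (b+1)).image (U (i+1))) := by
      rw [Finset.disjoint_left]
      intro x hx1 hx2
      simp only [Finset.mem_image, Finset.mem_range] at hx1 hx2
      obtain ⟨n, hn, rfl⟩ := hx1
      obtain ⟨n', hn', he⟩ := hx2
      exact hUne (i+1) i n' n hne1.symm he
    have hclique : R.IsClique (((Finset.range (a+1)).image (U i) ∪
        (Finset.range (b+1)).image (U (i+1)) : Finset V) : Set V) := by
      intro x hx y hy hxy
      simp only [Finset.coe_union, Set.mem_union, Finset.coe_image, Finset.coe_range,
        Set.mem_image, Set.mem_Iio] at hx hy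
      rcases hx with ⟨n, hn, rfl⟩ | ⟨n, hn, rfl⟩ <;>
        rcases hy with ⟨n', hn', rfl⟩ | ⟨n', hn', rfl⟩
      · exact hXadj i n n' (by omega) (by omega) (fun h => hxy (by rw [h]))
      · exact hcross_all i a b n n' ha hb (by omega) (by omega) hadj
      · exact (hcross_all i a b n' n ha hb (by omega) (by omega) hadj).symm
      · exact hXadj (i+1) n n' (by omega) (by omega) (fun h => hxy (by rw [h]))
    have hcard := Finset.card_union_of_disjoint hdisj
    have := hclique_le _ hclique
    omega
  have hmm_bound : ∀ i : ZMod k, mm i + 1 ≤ R.cliqueNum := by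
    intro i
    have hne1 : (i - 1 : ZMod k) ≠ i := by
      intro h
      have h2 := hself_ne (i - 1)
      rw [sub_add_cancel] at h2
      exact h2 h
    have hU0 : U (i-1) 0 = u (i-1) ⟨0, hmm _⟩ := by
      rw [hU]
      simp only []
      congr 1
    have hfadj : ∀ n, n < mm i → R.Adj (U (i-1) 0) (U i n) := by
      intro n hn
      have h1 : U i n ∈ closedNbhd R (u (i-1) ⟨0, hmm _⟩) := by
        rw [hu_first (i-1)]
        have he : (i - 1 + 1 : ZMod k) = i := by ring
        rw [he]
        exact Set.mem_union_right _ (hU_mem i n)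
      rw [← hU0] at h1
      exact hadj_of_closed _ _ h1 (fun h => hUne i (i-1) n 0 hne1.symm h)
    have hc1 : ((Finset.range (mm i)).image (U i)).card = mm i := by
      rw [Finset.card_image_of_injOn, Finset.card_range]
      intro x hx y hy hxy
      simp only [Finset.coe_range, Set.mem_Iio] at hx hy
      exact hU_inj i x y hx hy hxy
    have hnm : U (i-1) 0 ∉ (Finset.range (mm i)).image (U i) := by
      intro h
      simp only [Finset.mem_image, Finset.mem_range] at h
      obtain ⟨n, hn, he⟩ := h
      exact hUne i (i-1) n 0 hne1.symm he
    have hclique : R.IsClique ((insert (U (i-1) 0) ((Finset.range (mm i)).image (U i)) :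
        Finset V) : Set V) := by
      intro x hx y hy hxy
      simp only [Finset.coe_insert, Set.mem_insert_iff, Finset.coe_image, Finset.coe_range,
        Set.mem_image, Set.mem_Iio] at hx hy
      rcases hx with rfl | ⟨n, hn, rfl⟩ <;> rcases hy with rfl | ⟨n', hn', rfl⟩
      · exact absurd rfl hxy
      · exact hfadj n' hn'
      · exact (hfadj n hn).symm
      · exact hXadj i n n' hn hn' (fun h => hxy (by rw [h]))
    have hcard := Finset.card_insert_of_notMem hnm
    have := hclique_le _ hclique
    omega
  have hadj_parts : ∀ v v', R.Adj v v' →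
      part v' = part v - 1 ∨ part v' = part v ∨ part v' = part v + 1 := by
    intro v v' hadj
    have h1 : v' ∈ closedNbhd R v := hclosed_of_adj _ _ hadj
    have hle : (⟨0, hmm (part v)⟩ : Fin (mm (part v))) ≤
        ⟨(lv0 v) % mm (part v), Nat.mod_lt _ (hmm _)⟩ := by
      simp [Fin.mk_le_mk]
    have h2 : v' ∈ closedNbhd R (u (part v) ⟨0, hmm _⟩) := by
      have hveq : v = u (part v) ⟨(lv0 v) % mm (part v), Nat.mod_lt _ (hmm _)⟩ := hvU v
      refine hu_nested (part v) _ _ hle ?_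
      rw [← hveq]
      exact h1
    rw [hu_first (part v)] at h2
    rcases h2 with (h | h) | h
    · exact Or.inl (hpart_eq v' _ h)
    · exact Or.inr (Or.inl (hpart_eq v' _ h))
    · exact Or.inr (Or.inr (hpart_eq v' _ h))
  have hom2 : 2 ≤ R.cliqueNum := by
    have h1 := hmm_bound 0
    have h2 := hmm 0
    omega
  obtain ⟨c, hcb, hci, hcx⟩ := main_exists k R.cliqueNum hk (Nat.odd_iff.mp hko) hom2
  have hlv_le : ∀ v, lv0 v + 1 ≤ R.cliqueNum - 1 := by
    intro v
    have h1 := hlv0_lt v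
    have h2 := hmm_bound (part v)
    omega
  have hval_lt : ∀ v, c (part v).val (lv0 v + 1) < ringF k R.cliqueNum := by
    intro v
    exact hcb _ _ (ZMod.val_lt _) (by omega) (hlv_le v)
  have hvalid : ∀ {v v' : V}, R.Adj v v' →
      (⟨c (part v).val (lv0 v + 1), hval_lt v⟩ : Fin (ringF k R.cliqueNum)) ≠
      ⟨c (part v').val (lv0 v' + 1), hval_lt v'⟩ := by
    intro v v' hadj
    have hvne : v ≠ v' := R.ne_of_adj hadj
    simp only [Ne, Fin.mk.injEq]
    rcases hadj_parts v v' hadj with hpp | hpp | hpp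
    · have hpp' : part v = part v' + 1 := by rw [hpp]; ring
      have hadj2 : R.Adj (U (part v') (lv0 v')) (U (part v' + 1) (lv0 v)) := by
        rw [← hpp', ← hvU v, ← hvU v']
        exact hadj.symm
      have hsum := hcross_sum (part v') (lv0 v') (lv0 v) (hlv0_lt v')
        (by rw [← hpp']; exact hlv0_lt v) hadj2
      have hx := hcx (part v').val (lv0 v' + 1) (lv0 v + 1) (ZMod.val_lt _)
        (by omega) (by omega) (by omega)
      have hval : (part v).val = ((part v').val + 1) % k := by
        rw [hpp', ZMod.val_add, ZMod.val_one]
      rw [hval]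
      exact fun h => hx h.symm
    · have hlvne : lv0 v ≠ lv0 v' := by
        intro h
        apply hvne
        rw [hvU v, hvU v', hpp, h]
      have := hci (part v).val (lv0 v + 1) (lv0 v' + 1) (ZMod.val_lt _)
        (by omega) (hlv_le v) (by omega) (hlv_le v') (by omega)
      rw [hpp]
      exact this
    · have hadj2 : R.Adj (U (part v) (lv0 v)) (U (part v + 1) (lv0 v')) := by
        rw [← hpp, ← hvU v, ← hvU v']
        exact hadj
      have hsum := hcross_sum (part v) (lv0 v) (lv0 v') (hlv0_lt v)
        (by rw [← hpp]; exact hlv0_lt v') hadj2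
      have hx := hcx (part v).val (lv0 v + 1) (lv0 v' + 1) (ZMod.val_lt _)
        (by omega) (by omega) (by omega)
      have hval : (part v').val = ((part v).val + 1) % k := by
        rw [hpp, ZMod.val_add, ZMod.val_one]
      rw [hval]
      exact hx
  have hco : R.Coloring (Fin (ringF k R.cliqueNum)) :=
    SimpleGraph.Coloring.mk (fun v => ⟨c (part v).val (lv0 v + 1), hval_lt v⟩) hvalid
  have hcolorable : R.Colorable (ringF k R.cliqueNum) := by
    have := hco.colorable
    simpa using this
  exact_mod_cast hcolorable.chromaticNumber_le
end
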